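/- arXiv:2209.09140 — 6 statements merged into one kernel-verified Lean document; each statement's English description precedes it below -/
import Mathlib

section
/- Let (X, 𝓕, μ) be a σ-finite measure space, Φ an N-function, and φ : X → X a nonsingular measurable map with μ(φ⁻¹(F)) ≤ c μ(F) for every F ∈ 𝓕 and some c > 0. Then the following are equivalent: (2) there exists f ∈ L^Φ(μ), not μ-a.e. zero, with liminf_{n→∞} N_Φ(f ∘ φ^n) = 0; (3) there exists a measurable set F with 0 < μ(F) < ∞ such that limsup_{n→∞} Φ⁻¹(1/μ(φ^{-n}(F))) = ∞. -/
open MeasureTheory Filter Topology Set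
open scoped ENNReal NNReal

noncomputable section

/-- A Young function: an even convex function `Φ : ℝ → [0,∞]` with `Φ 0 = 0` and
`Φ x → ∞` as `x → ∞`. -/
structure IsYoungFunction (Φ : ℝ → ℝ≥0∞) : Prop where
  even : ∀ x : ℝ, Φ (-x) = Φ x
  convex : ∀ x y : ℝ, ∀ a b : ℝ≥0, a + b = 1 →
    Φ ((a : ℝ) * x + (b : ℝ) * y) ≤ (a : ℝ≥0∞) * Φ x + (b : ℝ≥0∞) * Φ y
  map_zero : Φ 0 = 0
  tendsto_atTop : Tendsto Φ atTop (nhds ⊤)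

/-- An N-function: a finite-valued Young function vanishing exactly at `0`, with
`Φ x / x → 0` as `x → 0⁺` and `Φ x / x → ∞` as `x → ∞`. -/
structure IsNFunction (Φ : ℝ → ℝ≥0∞) extends IsYoungFunction Φ : Prop where
  lt_top : ∀ x : ℝ, Φ x < ⊤
  eq_zero_iff : ∀ x : ℝ, Φ x = 0 ↔ x = 0
  tendsto_div_zero : Tendsto (fun x : ℝ => Φ x / ENNReal.ofReal x) (nhdsWithin 0 (Set.Ioi 0)) (nhds 0)
  tendsto_div_atTop : Tendsto (fun x : ℝ => Φ x / ENNReal.ofReal x) atTop (nhds ⊤)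

/-- The Δ₂-condition, globally: `Φ (2 x) ≤ K Φ x` for all `x ≥ 0`, for some `K > 0`. -/
def Delta2Global (Φ : ℝ → ℝ≥0∞) : Prop :=
  ∃ K : ℝ≥0, 0 < K ∧ ∀ x : ℝ, 0 ≤ x → Φ (2 * x) ≤ (K : ℝ≥0∞) * Φ x

/-- The generalized inverse `Φ⁻¹ (y) = inf {x ≥ 0 : Φ x > y}` (with `inf ∅ = ∞`). -/
def youngInv (Φ : ℝ → ℝ≥0∞) (y : ℝ≥0∞) : ℝ≥0∞ :=
  ⨅ (x : ℝ) (_ : 0 ≤ x) (_ : y < Φ x), ENNReal.ofReal x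

/-- The Luxemburg (gauge) norm `N_Φ (f) = inf {k > 0 : ∫ Φ (f / k) dμ ≤ 1}`
(with `inf ∅ = ∞`). -/
def luxNorm {X : Type*} [MeasurableSpace X] (Φ : ℝ → ℝ≥0∞) (μ : Measure X)
    (f : X → ℝ) : ℝ≥0∞ :=
  ⨅ (k : ℝ) (_ : 0 < k) (_ : ∫⁻ x, Φ (f x / k) ∂μ ≤ 1), ENNReal.ofReal k

/-- Membership in the Orlicz space `L^Φ(μ)`: `f` is measurable and
`∫ Φ (k f) dμ < ∞` for some `k > 0`. -/
def MemOrlicz {X : Type*} [MeasurableSpace X] (Φ : ℝ → ℝ≥0∞) (μ : Measure X)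
    (f : X → ℝ) : Prop :=
  Measurable f ∧ ∃ k : ℝ, 0 < k ∧ ∫⁻ x, Φ (k * f x) ∂μ < ⊤

/-- Li-Yorke chaos for the composition operator `C_φ f = f ∘ φ` on `L^Φ(μ)`:
there is an uncountable set `S ⊆ L^Φ(μ)` of pairwise not μ-a.e. equal functions such
that every pair of not μ-a.e. equal members is a Li-Yorke pair for `C_φ`. -/
def CompLiYorkeChaotic {X : Type*} [MeasurableSpace X] (Φ : ℝ → ℝ≥0∞) (μ : Measure X)
    (φ : X → X) : Prop :=
  ∃ S : Set (X → ℝ), ¬ S.Countable ∧ (∀ f ∈ S, MemOrlicz Φ μ f) ∧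
    (∀ f ∈ S, ∀ g ∈ S, f ≠ g → ¬ f =ᵐ[μ] g) ∧
    ∀ f ∈ S, ∀ g ∈ S, ¬ f =ᵐ[μ] g →
      atTop.liminf (fun n : ℕ => luxNorm Φ μ ((f - g) ∘ φ^[n])) = 0 ∧
      0 < atTop.limsup (fun n : ℕ => luxNorm Φ μ ((f - g) ∘ φ^[n]))

section Aux

variable {Φ : ℝ → ℝ≥0∞}

lemma IsNFunction.mono (hΦ : IsNFunction Φ) {s t : ℝ} (hs : 0 ≤ s) (hst : s ≤ t) :
    Φ s ≤ Φ t := by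
  rcases eq_or_lt_of_le (hs.trans hst) with ht | ht
  · have hs0 : s = 0 := le_antisymm (hst.trans ht.symm.le) hs
    rw [hs0, ← ht]
  · have hst' : s / t ≤ 1 := div_le_one_of_le₀ hst ht.le
    set a : ℝ≥0 := ⟨s / t, div_nonneg hs ht.le⟩ with ha
    have ha1 : a ≤ 1 := hst'
    have hab : a + (1 - a) = 1 := add_tsub_cancel_of_le ha1
    have hconv := hΦ.convex t 0 a (1 - a) hab
    have hs' : (a : ℝ) * t + ((1 - a : ℝ≥0) : ℝ) * 0 = s := by
      simp [ha, div_mul_cancel₀ s ht.ne']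
      exact div_mul_cancel₀ s ht.ne'
    rw [hs'] at hconv
    refine hconv.trans ?_
    rw [hΦ.map_zero, mul_zero, add_zero]
    calc (a : ℝ≥0∞) * Φ t ≤ 1 * Φ t := by
          gcongr
          exact_mod_cast ha1
      _ = Φ t := one_mul _

lemma IsNFunction.map_abs (hΦ : IsNFunction Φ) (a : ℝ) : Φ |a| = Φ a := by
  rcases abs_choice a with h | h
  · rw [h]
  · rw [h, hΦ.even]

lemma IsNFunction.mono_abs (hΦ : IsNFunction Φ) {a b : ℝ} (h : |a| ≤ |b|) : Φ a ≤ Φ b := by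
  rw [← hΦ.map_abs a, ← hΦ.map_abs b]
  exact hΦ.mono (abs_nonneg a) h

lemma ofReal_le_youngInv (hΦ : IsNFunction Φ) {t : ℝ} (ht : 0 ≤ t) {y : ℝ≥0∞}
    (h : Φ t ≤ y) : ENNReal.ofReal t ≤ youngInv Φ y := by
  refine le_iInf fun x => le_iInf fun hx => le_iInf fun hxy => ?_
  refine ENNReal.ofReal_le_ofReal (le_of_lt ?_)
  by_contra hxt
  push_neg at hxt
  exact absurd (h.trans_lt hxy) (not_lt.2 (hΦ.mono hx hxt))

lemma le_of_ofReal_lt_youngInv (hΦ : IsNFunction Φ) {t : ℝ} (ht : 0 ≤ t) {y : ℝ≥0∞}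
    (h : ENNReal.ofReal t < youngInv Φ y) : Φ t ≤ y := by
  by_contra h'
  push_neg at h'
  have : youngInv Φ y ≤ ENNReal.ofReal t :=
    iInf_le_of_le t (iInf_le_of_le ht (iInf_le _ h'))
  exact absurd (this.trans_lt h) (lt_irrefl _)

lemma le_one_div_iff {a b : ℝ≥0∞} : a ≤ 1 / b ↔ a * b ≤ 1 :=
  ENNReal.le_div_iff_mul_le (Or.inr one_ne_zero) (Or.inr ENNReal.one_ne_top)

end Aux

/-- Equivalence (2) ⇔ (3): there exists `f ∈ L^Φ(μ)`, not μ-a.e. zero, with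
`liminf_n N_Φ(f ∘ φ^n) = 0` iff there exists a measurable set `F` with `0 < μ F < ∞` and
`limsup_n Φ⁻¹(1/μ(φ^{-n}(F))) = ∞`. -/


theorem exists_nonzero_liminf_zero_iff_exists_set
    {X : Type*} [MeasurableSpace X] (μ : Measure X) [SigmaFinite μ]
    (Φ : ℝ → ℝ≥0∞) (hΦ : IsNFunction Φ)
    (φ : X → X) (hφ : Measurable φ) (c : ℝ≥0) (hc : 0 < c)
    (hbound : ∀ F : Set X, MeasurableSet F → μ (φ ⁻¹' F) ≤ (c : ℝ≥0∞) * μ F) :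
    (∃ f : X → ℝ, MemOrlicz Φ μ f ∧ ¬ f =ᵐ[μ] (fun _ => (0 : ℝ)) ∧
      atTop.liminf (fun n : ℕ => luxNorm Φ μ (f ∘ φ^[n])) = 0) ↔
    (∃ F : Set X, MeasurableSet F ∧ 0 < μ F ∧ μ F < ⊤ ∧
      atTop.limsup (fun n : ℕ => youngInv Φ (1 / μ (φ^[n] ⁻¹' F))) = ⊤) := by

  constructor
  · rintro ⟨f, ⟨hfm, k, hk, hfk⟩, hfne, hlim⟩
    -- choose ε with 0 < μ {x | ε < |f x|}
    have hne : μ {x | f x ≠ 0} ≠ 0 := by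
      intro h
      exact hfne (by simpa [EventuallyEq, ae_iff] using h)
    have hsub : {x | f x ≠ 0} ⊆ ⋃ n : ℕ, {x | 1 / (n + 1 : ℝ) < |f x|} := by
      intro x hx
      obtain ⟨n, hn⟩ := exists_nat_one_div_lt (abs_pos.2 hx)
      exact Set.mem_iUnion.2 ⟨n, by simpa using hn⟩
    have hex : ∃ n : ℕ, μ {x | 1 / (n + 1 : ℝ) < |f x|} ≠ 0 := by
      by_contra hco
      push_neg at hco
      exact hne (measure_mono_null hsub (measure_iUnion_null hco))
    obtain ⟨m, hm⟩ := hex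
    obtain ⟨ε, hεpos, hm⟩ : ∃ ε : ℝ, 0 < ε ∧ μ {x | ε < |f x|} ≠ 0 :=
      ⟨1 / (m + 1 : ℝ), by positivity, hm⟩
    set F : Set X := {x | ε < |f x|} with hFdef
    have hF : MeasurableSet F := measurableSet_lt measurable_const hfm.abs
    have hμF : 0 < μ F := pos_iff_ne_zero.2 hm
    -- Markov: μ F < ∞
    have hΦkε : Φ (k * ε) ≠ 0 := by
      rw [Ne, hΦ.eq_zero_iff]
      positivity
    have hmark : Φ (k * ε) * μ F ≤ ∫⁻ x, Φ (k * f x) ∂μ := by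
      rw [← setLIntegral_const F (Φ (k * ε)), ← lintegral_indicator hF]
      refine lintegral_mono fun x => ?_
      by_cases hx : x ∈ F
      · simp only [Set.indicator_of_mem hx]
        refine hΦ.mono_abs ?_
        rw [abs_mul, abs_mul, abs_of_pos hk, abs_of_pos hεpos]
        exact mul_le_mul_of_nonneg_left (le_of_lt hx) hk.le
      · simp [Set.indicator_of_notMem hx]
    have hμFfin : μ F < ⊤ := by
      by_contra h
      push_neg at h
      rw [top_le_iff.mp h, ENNReal.mul_top hΦkε] at hmark
      exact absurd (hmark.trans_lt hfk) (lt_irrefl _)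
    refine ⟨F, hF, hμF, hμFfin, ?_⟩
    rw [eq_top_iff, ← ENNReal.iSup_natCast]
    refine iSup_le fun M => ?_
    refine le_limsup_of_frequently_le' ?_
    -- frequently, luxNorm (f ∘ φ^[n]) < ofReal (ε / (M+1))
    have hδpos : 0 < ε / (M + 1 : ℝ) := by positivity
    have hfreq : ∃ᶠ n in atTop,
        luxNorm Φ μ (f ∘ φ^[n]) < ENNReal.ofReal (ε / (M + 1 : ℝ)) := by
      by_contra hco
      rw [not_frequently] at hco
      have : ENNReal.ofReal (ε / (M + 1 : ℝ)) ≤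
          atTop.liminf (fun n : ℕ => luxNorm Φ μ (f ∘ φ^[n])) := by
        refine le_liminf_of_le (by isBoundedDefault) (hco.mono fun n hn => not_lt.mp hn)
      rw [hlim] at this
      exact absurd this (by simp [hδpos.le, ENNReal.ofReal_eq_zero, not_le, hδpos])
    refine hfreq.mono fun n hn => ?_
    -- extract a witness k' from the infimum
    obtain ⟨k', hlt⟩ := iInf_lt_iff.mp hn
    obtain ⟨hk', hlt⟩ := iInf_lt_iff.mp hlt
    obtain ⟨hint, hlt⟩ := iInf_lt_iff.mp hlt
    have hk'δ : k' < ε / (M + 1 : ℝ) := by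
      exact (ENNReal.ofReal_lt_ofReal_iff hδpos).mp hlt
    -- Φ (ε / k') * μ (φ^[n] ⁻¹' F) ≤ 1
    set E : Set X := φ^[n] ⁻¹' F with hEdef
    have hE : MeasurableSet E := (hφ.iterate n) hF
    have hbnd : Φ (ε / k') * μ E ≤ 1 := by
      refine le_trans ?_ hint
      rw [← setLIntegral_const E (Φ (ε / k')), ← lintegral_indicator hE]
      refine lintegral_mono fun x => ?_
      by_cases hx : x ∈ E
      · simp only [Set.indicator_of_mem hx, Function.comp_apply]
        refine hΦ.mono_abs ?_
        have h5 : ε < |f (φ^[n] x)| := hx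
        calc |ε / k'| = ε / k' := abs_of_nonneg (by positivity)
          _ ≤ |f (φ^[n] x)| / k' := by gcongr
          _ = |f (φ^[n] x)| / |k'| := by rw [abs_of_pos hk']
          _ = |f (φ^[n] x) / k'| := (abs_div _ _).symm
      · simp [Set.indicator_of_notMem hx]
    have h1 : Φ (ε / k') ≤ 1 / μ E := le_one_div_iff.mpr hbnd
    have h2 : ENNReal.ofReal (ε / k') ≤ youngInv Φ (1 / μ E) :=
      ofReal_le_youngInv hΦ (by positivity) h1
    refine le_trans ?_ h2
    have hMk : (M : ℝ) ≤ ε / k' := by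
      have h3 : (M : ℝ) + 1 = ε / (ε / (M + 1 : ℝ)) := by
        field_simp
      have h4 : ε / (ε / (M + 1 : ℝ)) ≤ ε / k' := by
        gcongr
      nlinarith [h3 ▸ h4]
    calc (M : ℝ≥0∞) = ENNReal.ofReal (M : ℝ) := (ENNReal.ofReal_natCast M).symm
      _ ≤ ENNReal.ofReal (ε / k') := ENNReal.ofReal_le_ofReal hMk
  · rintro ⟨F, hF, hμF, hμFfin, hlim⟩
    set f : X → ℝ := F.indicator (fun _ => (1 : ℝ)) with hfdef
    have hfm : Measurable f := measurable_const.indicator hF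
    refine ⟨f, ⟨hfm, 1, one_pos, ?_⟩, ?_, ?_⟩
    · have : (fun x => Φ (1 * f x)) = F.indicator (fun _ => Φ 1) := by
        funext x
        by_cases hx : x ∈ F <;> simp [hfdef, hx, hΦ.map_zero]
      rw [this, lintegral_indicator hF, setLIntegral_const]
      exact ENNReal.mul_lt_top (hΦ.lt_top 1) hμFfin
    · intro h
      have : μ {x | f x ≠ 0} = 0 := by simpa [EventuallyEq, ae_iff] using h
      have hsub : F ⊆ {x | f x ≠ 0} := fun x hx => by simp [hfdef, hx]
      exact absurd (measure_mono_null hsub this) hμF.ne'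
    · refine le_antisymm ?_ zero_le
      refine ENNReal.le_of_forall_pos_le_add fun ε hε _ => ?_
      rw [zero_add]
      obtain ⟨M, hM⟩ := exists_nat_one_div_lt (by exact_mod_cast hε : (0 : ℝ) < (ε : ℝ))
      have key : atTop.liminf (fun n : ℕ => luxNorm Φ μ (f ∘ φ^[n])) ≤
          ENNReal.ofReal (1 / (M + 1 : ℝ)) := by
        refine liminf_le_of_frequently_le' ?_
        have hfr : ∃ᶠ n in atTop,
            ((M : ℝ≥0∞) + 1) < youngInv Φ (1 / μ (φ^[n] ⁻¹' F)) := by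
          refine frequently_lt_of_lt_limsup (by isBoundedDefault) ?_
          rw [hlim]
          exact lt_of_lt_of_le (ENNReal.add_lt_top.2 ⟨ENNReal.natCast_lt_top M,
            ENNReal.one_lt_top⟩) le_rfl
        refine hfr.mono fun n hn => ?_
        set E : Set X := φ^[n] ⁻¹' F with hEdef
        have hE : MeasurableSet E := (hφ.iterate n) hF
        have hcast : ENNReal.ofReal ((M : ℝ) + 1) = (M : ℝ≥0∞) + 1 := by
          rw [ENNReal.ofReal_add (by positivity) zero_le_one, ENNReal.ofReal_natCast,
            ENNReal.ofReal_one]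
        have h1 : Φ ((M : ℝ) + 1) ≤ 1 / μ E :=
          le_of_ofReal_lt_youngInv hΦ (by positivity) (by rw [hcast]; exact hn)
        have h2 : Φ ((M : ℝ) + 1) * μ E ≤ 1 := le_one_div_iff.mp h1
        have hcomp : f ∘ φ^[n] = E.indicator (fun _ => (1 : ℝ)) := by
          funext x
          by_cases hx : x ∈ E
          · have hx' : φ^[n] x ∈ F := hx
            simp [hfdef, Function.comp, Set.indicator_of_mem hx, hx']
          · have hx' : φ^[n] x ∉ F := hx
            simp [hfdef, Function.comp, hx', Set.indicator_of_notMem hx]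
        rw [hcomp]
        refine iInf_le_of_le (1 / (M + 1 : ℝ)) (iInf_le_of_le (by positivity)
          (iInf_le_of_le ?_ le_rfl))
        have : (fun x => Φ (E.indicator (fun _ => (1 : ℝ)) x / (1 / (M + 1 : ℝ)))) =
            E.indicator (fun _ => Φ ((M : ℝ) + 1)) := by
          funext x
          by_cases hx : x ∈ E
          · simp only [Set.indicator_of_mem hx]
            rw [one_div_one_div]
          · simp [Set.indicator_of_notMem hx, hΦ.map_zero]
        rw [this, lintegral_indicator hE, setLIntegral_const]
        exact h2
      refine key.trans ?_
      calc ENNReal.ofReal (1 / (M + 1 : ℝ)) ≤ ENNReal.ofReal (ε : ℝ) :=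
            ENNReal.ofReal_le_ofReal hM.le
        _ = (ε : ℝ≥0∞) := ENNReal.ofReal_coe_nnreal
end
end

section
/- Let (X, 𝓕, μ) be a σ-finite measure space, Φ an N-function, and φ : X → X a nonsingular measurable map. For every measurable set F with 0 < μ(F) < ∞, the indicator function χ_F is a semi-irregular vector for C_φ (i.e., liminf_{n→∞} N_Φ(χ_F ∘ φ^n) = 0 and limsup_{n→∞} N_Φ(χ_F ∘ φ^n) > 0) if and only if limsup_{n→∞} Φ⁻¹(1/μ(φ^{-n}(F))) = ∞ and liminf_{n→∞} Φ⁻¹(1/μ(φ^{-n}(F))) < ∞. In particular, for every n, N_Φ(χ_F ∘ φ^n) = 1 / Φ⁻¹(1/μ(φ^{-n}(F))). -/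
open MeasureTheory Filter Topology Set
open scoped ENNReal NNReal

noncomputable section

/-- A Young function is monotone on `[0, ∞)`. -/
lemma IsYoungFunction.mono {Φ : ℝ → ℝ≥0∞} (hΦ : IsYoungFunction Φ)
    {x y : ℝ} (hx : 0 ≤ x) (hxy : x ≤ y) : Φ x ≤ Φ y := by
  rcases eq_or_lt_of_le (hx.trans hxy) with hy | hy
  · have hx0 : x = 0 := le_antisymm (hxy.trans hy.symm.le) hx
    rw [hx0, ← hy]
  · set a : ℝ≥0 := ⟨(y + x) / (2 * y), by positivity⟩ with ha
    set b : ℝ≥0 := ⟨(y - x) / (2 * y), by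
      apply div_nonneg (by linarith) (by linarith)⟩ with hb
    have hab : a + b = 1 := by
      ext
      rw [NNReal.coe_add, NNReal.coe_one]
      show (y + x) / (2 * y) + (y - x) / (2 * y) = 1
      field_simp
      ring
    have hxy' : (a : ℝ) * y + (b : ℝ) * (-y) = x := by
      show (y + x) / (2 * y) * y + (y - x) / (2 * y) * (-y) = x
      field_simp
      ring
    have := hΦ.convex y (-y) a b hab
    rw [hxy', hΦ.even y] at this
    calc Φ x ≤ (a : ℝ≥0∞) * Φ y + (b : ℝ≥0∞) * Φ y := this
      _ = ((a + b : ℝ≥0) : ℝ≥0∞) * Φ y := by push_cast; rw [add_mul]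
      _ = Φ y := by rw [hab]; simp

/-- There are points `t > 0` with `Φ t ≤ c`, for any `c > 0`. -/
lemma IsNFunction.exists_small {Φ : ℝ → ℝ≥0∞} (hΦ : IsNFunction Φ)
    {c : ℝ≥0∞} (hc : 0 < c) : ∃ t : ℝ, 0 < t ∧ Φ t ≤ c := by
  have h1 : ∀ᶠ t in 𝓝[>] (0:ℝ), Φ t / ENNReal.ofReal t < 1 :=
    hΦ.tendsto_div_zero.eventually_lt_const one_pos
  have h2 : ∀ᶠ t in 𝓝[>] (0:ℝ), ENNReal.ofReal t < c := by
    have : Tendsto (fun t : ℝ => ENNReal.ofReal t) (𝓝[>] 0) (𝓝 0) := by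
      simpa using (ENNReal.continuous_ofReal.tendsto 0).mono_left nhdsWithin_le_nhds
    exact this.eventually_lt_const hc
  have h3 : ∀ᶠ t in 𝓝[>] (0:ℝ), t ∈ Set.Ioi (0:ℝ) := eventually_mem_nhdsWithin
  obtain ⟨t, ht1, ht2, ht3⟩ := (h1.and (h2.and h3)).exists
  have ht3' : (0:ℝ) < t := ht3
  have h0 : ENNReal.ofReal t ≠ 0 := by
    simp [ENNReal.ofReal_eq_zero, not_le, ht3']
  have hlt : Φ t < ENNReal.ofReal t := by
    rw [ENNReal.div_lt_iff (Or.inl h0) (Or.inl ENNReal.ofReal_ne_top), one_mul] at ht1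
    exact ht1
  exact ⟨t, ht3', le_of_lt (hlt.trans ht2)⟩

/-- Key computation: the Luxemburg norm of an indicator. -/
lemma luxNorm_indicator {X : Type*} [MeasurableSpace X] (μ : Measure X)
    (Φ : ℝ → ℝ≥0∞) (hΦ : IsNFunction Φ) (G : Set X) (hG : MeasurableSet G) :
    luxNorm Φ μ (G.indicator fun _ => (1 : ℝ)) = 1 / youngInv Φ (1 / μ G) := by
  have hint : ∀ k : ℝ, ∫⁻ x, Φ (G.indicator (fun _ => (1:ℝ)) x / k) ∂μ = Φ (1/k) * μ G := by
    intro k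
    have heq : (fun x => Φ (G.indicator (fun _ => (1:ℝ)) x / k))
        = G.indicator (fun _ => Φ (1/k)) := by
      funext x
      by_cases hx : x ∈ G
      · simp [Set.indicator_of_mem hx]
      · simp [Set.indicator_of_notMem hx, hΦ.map_zero]
    rw [heq, lintegral_indicator hG, setLIntegral_const]
  rcases eq_or_ne (μ G) 0 with hm | hm0
  · -- μ G = 0 : luxNorm = 0, youngInv (1/0 = ⊤) = ⊤
    have hy : youngInv Φ (1 / μ G) = ⊤ := by
      rw [hm, ENNReal.div_zero one_ne_zero]
      refine le_antisymm le_top (le_iInf fun x => le_iInf fun _ => le_iInf fun h => ?_)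
      exact absurd h not_top_lt
    rw [hy, ENNReal.div_top]
    refine le_antisymm (ENNReal.le_of_forall_pos_le_add fun ε hε _ => ?_) (zero_le)
    rw [zero_add]
    have hεR : (0:ℝ) < (ε : ℝ) := hε
    calc luxNorm Φ μ (G.indicator fun _ => (1:ℝ))
        ≤ ENNReal.ofReal (ε : ℝ) := by
          refine iInf_le_of_le (ε : ℝ) (iInf_le_of_le hεR (iInf_le_of_le ?_ le_rfl))
          rw [hint, hm, mul_zero]; exact zero_le_one
      _ = (ε : ℝ≥0∞) := ENNReal.ofReal_coe_nnreal
  rcases eq_or_ne (μ G) ⊤ with hm | hmtop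
  · -- μ G = ⊤ : luxNorm = ⊤, youngInv (1/⊤ = 0) = 0
    have hy : youngInv Φ (1 / μ G) = 0 := by
      rw [hm, ENNReal.div_top]
      refine le_antisymm (ENNReal.le_of_forall_pos_le_add fun ε hε _ => ?_) (zero_le)
      rw [zero_add]
      have hεR : (0:ℝ) < (ε : ℝ) := hε
      calc youngInv Φ 0 ≤ ENNReal.ofReal (ε : ℝ) := by
            refine iInf_le_of_le (ε : ℝ) (iInf_le_of_le hεR.le (iInf_le_of_le ?_ le_rfl))
            rw [pos_iff_ne_zero]
            simp [hΦ.eq_zero_iff, hεR.ne']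
        _ = (ε : ℝ≥0∞) := ENNReal.ofReal_coe_nnreal
    rw [hy, ENNReal.div_zero one_ne_zero]
    refine le_antisymm le_top (le_iInf fun k => le_iInf fun hk => le_iInf fun h => ?_)
    exfalso
    rw [hint, hm, ENNReal.mul_top (by simp [hΦ.eq_zero_iff, one_div, inv_eq_zero, hk.ne'])] at h
    exact absurd h (by simp)
  · -- 0 < μ G < ⊤
    set c : ℝ≥0∞ := 1 / μ G with hc
    have hc0 : 0 < c := by
      rw [hc, pos_iff_ne_zero, one_div]
      exact ENNReal.inv_ne_zero.mpr hmtop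
    have hctop : c ≠ ⊤ := by
      rw [hc, one_div]
      exact ENNReal.inv_ne_top.mpr hm0
    set S : Set ℝ := {x | 0 ≤ x ∧ c < Φ x} with hS
    have hSne : S.Nonempty := by
      have h1 : ∀ᶠ x in atTop, Φ x ∈ Set.Ioi c :=
        hΦ.tendsto_atTop.eventually (Ioi_mem_nhds hctop.lt_top)
      obtain ⟨x, hx1, hx2⟩ := (h1.and (eventually_ge_atTop (0:ℝ))).exists
      exact ⟨x, hx2, hx1⟩
    have hbdd : BddBelow S := ⟨0, fun x hx => hx.1⟩
    obtain ⟨t, ht0, htc⟩ := hΦ.exists_small hc0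
    set a : ℝ := sInf S with ha
    have hta : t ≤ a := by
      refine le_csInf hSne fun x hx => ?_
      by_contra h
      push_neg at h
      exact absurd hx.2 (not_lt.mpr ((hΦ.toIsYoungFunction.mono hx.1 h.le).trans htc))
    have ha0 : 0 < a := lt_of_lt_of_le ht0 hta
    have hbelow : ∀ x : ℝ, 0 ≤ x → x < a → Φ x ≤ c := by
      intro x hx hxa
      by_contra h
      push_neg at h
      exact absurd (csInf_le hbdd ⟨hx, h⟩) (not_le.mpr hxa)
    have hy : youngInv Φ c = ENNReal.ofReal a := by
      refine le_antisymm (ENNReal.le_of_forall_pos_le_add fun ε hε _ => ?_)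
        (le_iInf fun x => le_iInf fun hx => le_iInf fun hcx =>
          ENNReal.ofReal_le_ofReal (csInf_le hbdd ⟨hx, hcx⟩))
      have hεR : (0:ℝ) < (ε : ℝ) := hε
      obtain ⟨x, hxS, hxlt⟩ := Real.lt_sInf_add_pos hSne hεR
      calc youngInv Φ c ≤ ENNReal.ofReal x :=
            iInf_le_of_le x (iInf_le_of_le hxS.1 (iInf_le_of_le hxS.2 le_rfl))
        _ ≤ ENNReal.ofReal (a + (ε:ℝ)) := ENNReal.ofReal_le_ofReal hxlt.le
        _ = ENNReal.ofReal a + (ε : ℝ≥0∞) := by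
            rw [ENNReal.ofReal_add ha0.le hεR.le, ENNReal.ofReal_coe_nnreal]
    have hcond : ∀ k : ℝ, 0 < k →
        ((∫⁻ x, Φ (G.indicator (fun _ => (1:ℝ)) x / k) ∂μ ≤ 1) ↔ Φ (1/k) ≤ c) := by
      intro k hk
      rw [hint, hc, ← ENNReal.le_div_iff_mul_le (Or.inl hm0) (Or.inl hmtop)]
    have hlux : luxNorm Φ μ (G.indicator fun _ => (1:ℝ)) = ENNReal.ofReal a⁻¹ := by
      refine le_antisymm (ENNReal.le_of_forall_pos_le_add fun ε hε _ => ?_)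
        (le_iInf fun k => le_iInf fun hk => le_iInf fun h => ?_)
      · have hεR : (0:ℝ) < (ε : ℝ) := hε
        set k : ℝ := a⁻¹ + (ε:ℝ) with hk
        have hk0 : 0 < k := by positivity
        have hka : 1/k < a := by
          rw [one_div, hk]
          calc (a⁻¹ + (ε:ℝ))⁻¹ < (a⁻¹)⁻¹ := by
                apply inv_strictAnti₀ (by positivity); linarith
            _ = a := inv_inv a
        have hΦk : Φ (1/k) ≤ c := hbelow _ (by positivity) hka
        calc luxNorm Φ μ (G.indicator fun _ => (1:ℝ)) ≤ ENNReal.ofReal k :=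
              iInf_le_of_le k (iInf_le_of_le hk0
                (iInf_le_of_le ((hcond k hk0).mpr hΦk) le_rfl))
          _ = ENNReal.ofReal a⁻¹ + (ε : ℝ≥0∞) := by
              rw [hk, ENNReal.ofReal_add (by positivity) hεR.le, ENNReal.ofReal_coe_nnreal]
      · -- lower bound: every admissible k satisfies a⁻¹ ≤ k
        rw [hcond k hk] at h
        have hka : 1/k ≤ a := by
          by_contra hlt
          push_neg at hlt
          obtain ⟨x, hxS, hxlt⟩ := (csInf_lt_iff hbdd hSne).mp hlt
          exact absurd ((hΦ.toIsYoungFunction.mono hxS.1 hxlt.le).trans h)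
            (not_le.mpr hxS.2)
        have : a⁻¹ ≤ k := by
          rw [one_div] at hka
          calc a⁻¹ ≤ (k⁻¹)⁻¹ := by
                apply inv_anti₀ (by positivity) hka
            _ = k := inv_inv k
        exact ENNReal.ofReal_le_ofReal this
    rw [hlux, hy, one_div, ← ENNReal.ofReal_inv_of_pos ha0]

/-- Equivalence (6) ⇔ (7): for a measurable set `F` with `0 < μ F < ∞`, the indicator `χ_F` is
a semi-irregular vector for `C_φ` iff `limsup_n Φ⁻¹(1/μ(φ^{-n}(F))) = ∞` and
`liminf_n Φ⁻¹(1/μ(φ^{-n}(F))) < ∞`. In particular,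
`N_Φ(χ_F ∘ φ^n) = 1 / Φ⁻¹(1/μ(φ^{-n}(F)))` for every `n`. -/
theorem indicator_semiIrregular_iff
    {X : Type*} [MeasurableSpace X] (μ : Measure X) [SigmaFinite μ]
    (Φ : ℝ → ℝ≥0∞) (hΦ : IsNFunction Φ)
    (φ : X → X) (hφ : Measurable φ)
    (hns : ∀ F : Set X, MeasurableSet F → μ F = 0 → μ (φ ⁻¹' F) = 0)
    (F : Set X) (hF : MeasurableSet F) (hF0 : 0 < μ F) (hF1 : μ F < ⊤) :
    ((atTop.liminf
        (fun n : ℕ => luxNorm Φ μ ((F.indicator fun _ => (1 : ℝ)) ∘ φ^[n])) = 0 ∧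
      0 < atTop.limsup
        (fun n : ℕ => luxNorm Φ μ ((F.indicator fun _ => (1 : ℝ)) ∘ φ^[n]))) ↔
     (atTop.limsup (fun n : ℕ => youngInv Φ (1 / μ (φ^[n] ⁻¹' F))) = ⊤ ∧
      atTop.liminf (fun n : ℕ => youngInv Φ (1 / μ (φ^[n] ⁻¹' F))) < ⊤)) ∧
    ∀ n : ℕ, luxNorm Φ μ ((F.indicator fun _ => (1 : ℝ)) ∘ φ^[n]) =
      1 / youngInv Φ (1 / μ (φ^[n] ⁻¹' F)) := by
  have key : ∀ n : ℕ, luxNorm Φ μ ((F.indicator fun _ => (1 : ℝ)) ∘ φ^[n]) =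
      1 / youngInv Φ (1 / μ (φ^[n] ⁻¹' F)) := by
    intro n
    have hcomp : (F.indicator fun _ => (1 : ℝ)) ∘ φ^[n]
        = (φ^[n] ⁻¹' F).indicator (fun _ => (1:ℝ)) := by
      funext x
      by_cases hx : φ^[n] x ∈ F
      · simp [Function.comp, Set.indicator_of_mem, hx, Set.mem_preimage]
      · simp [Function.comp, Set.indicator_of_notMem, hx, Set.mem_preimage]
    rw [hcomp]
    exact luxNorm_indicator μ Φ hΦ _ ((hφ.iterate n) hF)
  refine ⟨?_, key⟩
  simp only [key, one_div]
  rw [show (fun n : ℕ => (youngInv Φ (μ (φ^[n] ⁻¹' F))⁻¹)⁻¹)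
      = fun n : ℕ => ((fun n : ℕ => youngInv Φ (μ (φ^[n] ⁻¹' F))⁻¹) n)⁻¹ from rfl,
    ← ENNReal.inv_limsup, ← ENNReal.inv_liminf]
  simp [ENNReal.inv_eq_zero, pos_iff_ne_zero, ENNReal.inv_ne_zero, lt_top_iff_ne_top]
end
end

section
/- Let (X, 𝓕, μ) be a σ-finite measure space, Φ an N-function, and φ : X → X a nonsingular measurable map with μ(φ⁻¹(F)) ≤ c μ(F) for every F ∈ 𝓕 and some c > 0. If there exists a measurable set F with 0 < μ(F) < ∞ such that χ_F is a semi-irregular vector for C_φ, i.e., liminf_{n→∞} N_Φ(χ_F ∘ φ^n) = 0 and limsup_{n→∞} N_Φ(χ_F ∘ φ^n) > 0, then the composition operator C_φ on L^Φ(μ) is Li-Yorke chaotic. -/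
open MeasureTheory Filter Topology Set
open scoped ENNReal NNReal

noncomputable section

/-!
If `f` is a semi-irregular vector for `C_φ`, so is every nonzero multiple of `f`: the Luxemburg
norm is absolutely homogeneous (for even `Φ`) and `C_φ` is linear. Hence all differences
`t χ_F - s χ_F = (t - s) χ_F` of the uncountable family `{t χ_F : t > 0}` are semi-irregular, so
that family is a scrambled set.
-/

def IsSemiIrregular {X : Type*} [MeasurableSpace X] (Φ : ℝ → ℝ≥0∞) (μ : Measure X)
    (φ : X → X) (f : X → ℝ) : Prop :=
  atTop.liminf (fun n : ℕ => luxNorm Φ μ (f ∘ φ^[n])) = 0 ∧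
    0 < atTop.limsup (fun n : ℕ => luxNorm Φ μ (f ∘ φ^[n]))

section

variable {X : Type*} [MeasurableSpace X] {Φ : ℝ → ℝ≥0∞} {μ : Measure X} {φ : X → X}
  {f : X → ℝ}

lemma luxNorm_const_smul (heven : ∀ x : ℝ, Φ (-x) = Φ x) {a : ℝ} (ha : a ≠ 0) :
    luxNorm Φ μ (a • f) = ENNReal.ofReal |a| * luxNorm Φ μ f := by
  have ha' : 0 < |a| := abs_pos.2 ha
  have hΦ_div : ∀ x k : ℝ, Φ (a * x / (|a| * k)) = Φ (x / k) := by
    intro x k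
    rcases abs_choice a with h | h <;> rw [h]
    · rw [mul_div_mul_left x k ha]
    · rw [neg_mul, div_neg, mul_div_mul_left x k ha, heven]
  -- substitute `k = |a| * k'` in the infimum defining `luxNorm Φ μ (a • f)`
  rw [luxNorm, luxNorm, ← (Equiv.mulLeft₀ |a| ha'.ne').iInf_comp]
  simp only [Equiv.mulLeft₀_apply, mul_pos_iff_of_pos_left ha', Pi.smul_apply, smul_eq_mul,
    hΦ_div, ENNReal.ofReal_mul ha'.le,
    ENNReal.mul_iInf_of_ne (ENNReal.ofReal_pos.2 ha').ne' ENNReal.ofReal_ne_top]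

lemma MemOrlicz.const_smul (hf : MemOrlicz Φ μ f) {a : ℝ} (ha : 0 < a) :
    MemOrlicz Φ μ (a • f) := by
  obtain ⟨hmeas, k, hk, hint⟩ := hf
  refine ⟨hmeas.const_smul a, k / a, div_pos hk ha, ?_⟩
  have hscale : ∀ x, k / a * (a • f) x = k * f x := fun x => by
    rw [Pi.smul_apply, smul_eq_mul, ← mul_assoc, div_mul_cancel₀ k ha.ne']
  simpa only [hscale] using hint

lemma memOrlicz_indicator_one (hΦ0 : Φ 0 = 0) (hΦ1 : Φ 1 ≠ ⊤) {F : Set X}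
    (hF : MeasurableSet F) (hμF : μ F ≠ ⊤) :
    MemOrlicz Φ μ (F.indicator fun _ => (1 : ℝ)) := by
  refine ⟨measurable_const.indicator hF, 1, one_pos, ?_⟩
  have hcomp : (fun x => Φ (1 * F.indicator (fun _ => (1 : ℝ)) x)) = F.indicator fun _ => Φ 1 := by
    ext x
    by_cases hx : x ∈ F <;> simp [hx, hΦ0]
  rw [hcomp, lintegral_indicator_const hF]
  exact ENNReal.mul_lt_top hΦ1.lt_top hμF.lt_top

lemma IsSemiIrregular.const_smul (heven : ∀ x : ℝ, Φ (-x) = Φ x)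
    (hf : IsSemiIrregular Φ μ φ f) {a : ℝ} (ha : a ≠ 0) :
    IsSemiIrregular Φ μ φ (a • f) := by
  have hnorm : ∀ n : ℕ, luxNorm Φ μ ((a • f) ∘ φ^[n])
      = ENNReal.ofReal |a| * luxNorm Φ μ (f ∘ φ^[n]) := fun n => by
    rw [Pi.smul_comp, luxNorm_const_smul heven ha]
  have ha' : ENNReal.ofReal |a| ≠ 0 := (ENNReal.ofReal_pos.2 (abs_pos.2 ha)).ne'
  simp only [IsSemiIrregular, hnorm, ENNReal.liminf_const_mul_of_ne_top ENNReal.ofReal_ne_top,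
    ENNReal.limsup_const_mul_of_ne_top ENNReal.ofReal_ne_top, hf.1, mul_zero, true_and]
  exact ENNReal.mul_pos ha' hf.2.ne'

theorem compLiYorkeChaotic_of_isSemiIrregular (heven : ∀ x : ℝ, Φ (-x) = Φ x)
    (hf : MemOrlicz Φ μ f) (hf0 : ¬ f =ᵐ[μ] 0) (hsemi : IsSemiIrregular Φ μ φ f) :
    CompLiYorkeChaotic Φ μ φ := by
  have hsmul_ae_ne : ∀ t s : ℝ, t ≠ s → ¬ t • f =ᵐ[μ] s • f := fun t s hts hae =>
    hf0 (hae.mono fun x hx => by simpa [hts] using hx)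
  have hinj : Function.Injective fun t : ℝ => t • f :=
    smul_left_injective ℝ fun h => hf0 (h ▸ ae_eq_refl _)
  have hIoi : ¬ (Ioi (0 : ℝ)).Countable := fun h => by simpa using h.measure_zero volume
  refine ⟨(· • f) '' Ioi 0, fun h => hIoi (countable_of_injective_of_countable_image
    hinj.injOn h), ?_, ?_, ?_⟩
  · rintro _ ⟨t, ht, rfl⟩
    exact hf.const_smul ht
  · rintro _ ⟨t, -, rfl⟩ _ ⟨s, -, rfl⟩ hne
    exact hsmul_ae_ne t s (ne_of_apply_ne (· • f) hne)
  · rintro _ ⟨t, -, rfl⟩ _ ⟨s, -, rfl⟩ hae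
    rw [← sub_smul]
    exact hsemi.const_smul heven (sub_ne_zero.2 fun h => hae (h ▸ ae_eq_refl _))

end

theorem compLiYorkeChaotic_of_indicator_semiIrregular_general
    {X : Type*} [MeasurableSpace X] (μ : Measure X)
    (Φ : ℝ → ℝ≥0∞) (hΦ : IsNFunction Φ)
    (φ : X → X)
    (F : Set X) (hF : MeasurableSet F) (hF0 : 0 < μ F) (hF1 : μ F < ⊤)
    (hliminf : atTop.liminf
      (fun n : ℕ => luxNorm Φ μ ((F.indicator fun _ => (1 : ℝ)) ∘ φ^[n])) = 0)
    (hlimsup : 0 < atTop.limsup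
      (fun n : ℕ => luxNorm Φ μ ((F.indicator fun _ => (1 : ℝ)) ∘ φ^[n]))) :
    CompLiYorkeChaotic Φ μ φ := by
  have hχ_ae_ne : ¬ F.indicator (fun _ => (1 : ℝ)) =ᵐ[μ] 0 := by
    rw [indicator_ae_eq_zero, Function.support_const one_ne_zero, inter_univ]
    exact hF0.ne'
  exact compLiYorkeChaotic_of_isSemiIrregular hΦ.even
    (memOrlicz_indicator_one hΦ.map_zero (hΦ.lt_top 1).ne hF hF1.ne) hχ_ae_ne
    ⟨hliminf, hlimsup⟩

/-- Implication (7) ⇒ (1): if some indicator `χ_F`, with `F` measurable of finite positive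
measure, is a semi-irregular vector for `C_φ`, then `C_φ` is Li-Yorke chaotic on `L^Φ(μ)`. -/
theorem compLiYorkeChaotic_of_indicator_semiIrregular
    {X : Type*} [MeasurableSpace X] (μ : Measure X) [SigmaFinite μ]
    (Φ : ℝ → ℝ≥0∞) (hΦ : IsNFunction Φ)
    (φ : X → X) (hφ : Measurable φ) (c : ℝ≥0) (hc : 0 < c)
    (hbound : ∀ F : Set X, MeasurableSet F → μ (φ ⁻¹' F) ≤ (c : ℝ≥0∞) * μ F)
    (F : Set X) (hF : MeasurableSet F) (hF0 : 0 < μ F) (hF1 : μ F < ⊤)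
    (hliminf : atTop.liminf
      (fun n : ℕ => luxNorm Φ μ ((F.indicator fun _ => (1 : ℝ)) ∘ φ^[n])) = 0)
    (hlimsup : 0 < atTop.limsup
      (fun n : ℕ => luxNorm Φ μ ((F.indicator fun _ => (1 : ℝ)) ∘ φ^[n]))) :
    CompLiYorkeChaotic Φ μ φ :=
  compLiYorkeChaotic_of_indicator_semiIrregular_general μ Φ hΦ φ F hF hF0 hF1 hliminf hlimsup
end
end

section
/- Let (X, 𝓕, μ) be a measure space with μ(X) < ∞, Φ an N-function satisfying the Δ₂-condition globally, and φ : X → X an injective nonsingular measurable map that maps measurable sets to measurable sets and satisfies μ(φ⁻¹(F)) ≤ c μ(F) for every F ∈ 𝓕 and some c > 0. Then the following are equivalent: (1) the composition operator C_φ on L^Φ(μ) is Li-Yorke chaotic; (2) there exists f ∈ L^Φ(μ), not μ-a.e. zero, with liminf_{n→∞} N_Φ(f ∘ φ^n) = 0; (3) there exists a measurable set F with 0 < μ(F) < ∞ such that limsup_{n→∞} Φ⁻¹(1/μ(φ^{-n}(F))) = ∞; (4) there exists a measurable set F with 0 < μ(F) < ∞ such that limsup_{n→∞} Φ⁻¹(1/μ(φ^{n}(F)))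 = ∞; (5) there exists a measurable set F with 0 < μ(F) < ∞ such that limsup_{n→∞} Φ⁻¹(1/μ(φ^{-n}(F))) = ∞ and limsup_{n→∞} Φ⁻¹(1/μ(φ^{n}(F))) = ∞; (7) there exists a measurable set F with 0 < μ(F) < ∞ such that χ_F is a semi-irregular vector for C_φ. -/
open MeasureTheory Filter Topology Set
open scoped ENNReal NNReal

noncomputable section

namespace LY

/-! ### Basic facts about N-functions -/

section Phi
variable {Φ : ℝ → ℝ≥0∞}

lemma phi_mono (hΦ : IsNFunction Φ) {x y : ℝ} (hx : 0 ≤ x) (hxy : x ≤ y) : Φ x ≤ Φ y := by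
  rcases eq_or_lt_of_le hx with hx0 | hx0
  · rw [← hx0, hΦ.map_zero]; exact zero_le
  · have hy : 0 < y := lt_of_lt_of_le hx0 hxy
    have hxy' : x / y ≤ 1 := (div_le_one hy).2 hxy
    set a : ℝ≥0 := ⟨x / y, by positivity⟩ with ha
    have ha1 : a ≤ 1 := by
      rw [← NNReal.coe_le_coe]; exact hxy'
    have hab : a + (1 - a) = 1 := add_tsub_cancel_of_le ha1
    have h := hΦ.convex y 0 a (1 - a) hab
    have harg : (a : ℝ) * y + ((1 - a : ℝ≥0) : ℝ) * 0 = x := by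
      simp only [mul_zero, add_zero]; exact div_mul_cancel₀ _ (ne_of_gt hy)
    rw [harg] at h
    calc Φ x ≤ (a : ℝ≥0∞) * Φ y + ((1 - a : ℝ≥0) : ℝ≥0∞) * Φ 0 := h
      _ = (a : ℝ≥0∞) * Φ y := by simp [hΦ.map_zero]
      _ ≤ 1 * Φ y := by
          gcongr
          exact_mod_cast ha1
      _ = Φ y := one_mul _

lemma phi_abs (hΦ : IsNFunction Φ) (x : ℝ) : Φ |x| = Φ x := by
  rcases le_or_gt 0 x with h | h
  · rw [abs_of_nonneg h]
  · rw [abs_of_neg h, ← hΦ.even x]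

lemma phi_pos (hΦ : IsNFunction Φ) {x : ℝ} (hx : 0 < x) : 0 < Φ x := by
  rcases eq_or_ne (Φ x) 0 with h | h
  · exact absurd ((hΦ.eq_zero_iff x).1 h) (ne_of_gt hx)
  · exact pos_iff_ne_zero.2 h

lemma phi_measurable (hΦ : IsNFunction Φ) : Measurable Φ := by
  have hmono : Monotone fun t : ℝ => Φ (max t 0) := by
    intro s t hst
    exact phi_mono hΦ (le_max_right s 0) (max_le_max hst le_rfl)
  have hmeas : Measurable fun t : ℝ => Φ (max t 0) := hmono.measurable
  have : Φ = fun x : ℝ => Φ (max |x| 0) := by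
    funext x
    rw [max_eq_left (abs_nonneg x), phi_abs hΦ]
  rw [this]
  exact hmeas.comp measurable_id.abs

/-- For every `K < ∞` and `M₀`, there is `x ≥ max M₀ 1 > 0` with `Φ x > K`. -/
lemma exists_phi_gt (hΦ : IsNFunction Φ) (K : ℝ≥0∞) (hK : K ≠ ⊤) (M₀ : ℝ) :
    ∃ x : ℝ, M₀ ≤ x ∧ 0 < x ∧ K < Φ x := by
  have h1 : Set.Ioi K ∈ nhds (⊤ : ℝ≥0∞) := isOpen_Ioi.mem_nhds (lt_top_iff_ne_top.2 hK)
  have h2 := hΦ.tendsto_atTop h1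
  rw [Filter.mem_map, Filter.mem_atTop_sets] at h2
  obtain ⟨a, ha⟩ := h2
  refine ⟨max a (max M₀ 1), le_trans (le_max_left _ _) (le_max_right _ _),
    lt_of_lt_of_le one_pos (le_trans (le_max_right _ _) (le_max_right _ _)), ?_⟩
  exact ha _ (le_max_left _ _)

/-! ### Facts about the generalized inverse -/

lemma youngInv_le (Φ : ℝ → ℝ≥0∞) {x : ℝ} (hx : 0 ≤ x) {y : ℝ≥0∞} (h : y < Φ x) :
    youngInv Φ y ≤ ENNReal.ofReal x :=
  iInf_le_of_le x (iInf_le_of_le hx (iInf_le _ h))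

lemma le_youngInv (hΦ : IsNFunction Φ) {M : ℝ} (hM : 0 ≤ M) {y : ℝ≥0∞} (h : Φ M ≤ y) :
    ENNReal.ofReal M ≤ youngInv Φ y := by
  refine le_iInf fun x => le_iInf fun hx => le_iInf fun hxy => ?_
  refine ENNReal.ofReal_le_ofReal ?_
  by_contra hc
  push_neg at hc
  exact absurd (lt_of_le_of_lt h hxy) (not_lt.2 (phi_mono hΦ hx hc.le))

end Phi

/-! ### liminf / limsup helpers for `ℝ≥0∞`-valued sequences -/

section LimInfSup
variable {u : ℕ → ℝ≥0∞}

lemma liminf_eq_zero_of (h : ∀ ε : ℝ≥0∞, 0 < ε → ∀ N : ℕ, ∃ n, N ≤ n ∧ u n ≤ ε) :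
    atTop.liminf u = 0 := by
  refine le_antisymm ?_ zero_le
  rw [Filter.liminf_eq]
  refine sSup_le fun a ha => ?_
  simp only [Set.mem_setOf_eq, Filter.eventually_atTop] at ha
  obtain ⟨N, hN⟩ := ha
  rcases eq_or_ne a ⊤ with rfl | hatop
  · obtain ⟨n, hn, hun⟩ := h 1 one_pos N
    exact absurd (le_trans (hN n hn) hun) (by simp)
  · by_contra hpos
    push_neg at hpos
    have ha0 : a ≠ 0 := by simpa using (pos_iff_ne_zero.1 hpos)
    obtain ⟨n, hn, hun⟩ := h (a / 2) (ENNReal.half_pos (by exact_mod_cast ha0)) N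
    exact absurd (le_trans (hN n hn) hun) (not_le.2 (ENNReal.half_lt_self ha0 hatop))

lemma freq_le_of_liminf_eq_zero (h : atTop.liminf u = 0) :
    ∀ ε : ℝ≥0∞, 0 < ε → ∀ N : ℕ, ∃ n, N ≤ n ∧ u n ≤ ε := by
  intro ε hε N
  by_contra hc
  push_neg at hc
  have : ε ≤ atTop.liminf u := by
    rw [Filter.liminf_eq]
    refine le_sSup ?_
    simp only [Set.mem_setOf_eq, Filter.eventually_atTop]
    exact ⟨N, fun n hn => (hc n hn).le⟩
  rw [h] at this
  exact absurd this (not_le.2 hε)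

lemma limsup_pos_of {δ : ℝ≥0∞} (hδ : 0 < δ) (h : ∀ N : ℕ, ∃ n, N ≤ n ∧ δ ≤ u n) :
    0 < atTop.limsup u := by
  refine lt_of_lt_of_le hδ ?_
  rw [Filter.limsup_eq]
  refine le_sInf fun a ha => ?_
  simp only [Set.mem_setOf_eq, Filter.eventually_atTop] at ha
  obtain ⟨N, hN⟩ := ha
  obtain ⟨n, hn, hun⟩ := h N
  exact le_trans hun (hN n hn)

lemma exists_freq_of_limsup_pos (h : 0 < atTop.limsup u) :
    ∃ δ : ℝ≥0∞, 0 < δ ∧ ∀ N : ℕ, ∃ n, N ≤ n ∧ δ ≤ u n := by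
  by_contra hc
  push_neg at hc
  have hle : ∀ δ : ℝ≥0∞, 0 < δ → atTop.limsup u ≤ δ := by
    intro δ hδ
    obtain ⟨N, hN⟩ := hc δ hδ
    rw [Filter.limsup_eq]
    refine sInf_le ?_
    simp only [Set.mem_setOf_eq, Filter.eventually_atTop]
    exact ⟨N, fun n hn => ((hN n hn).le)⟩
  have : atTop.limsup u ≤ 0 := by
    refine ENNReal.le_of_forall_pos_le_add fun ε hε _ => ?_
    simpa using hle ε (by exact_mod_cast hε : (0:ℝ≥0∞) < ε)
  exact absurd (lt_of_lt_of_le h this) (by simp)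

lemma limsup_eq_top_of (h : ∀ M : ℝ, ∀ N : ℕ, ∃ n, N ≤ n ∧ ENNReal.ofReal M ≤ u n) :
    atTop.limsup u = ⊤ := by
  by_contra hc
  have hlt : atTop.limsup u < ⊤ := lt_top_iff_ne_top.2 hc
  set L := atTop.limsup u with hL
  have hM : ENNReal.ofReal (L.toReal + 1) ≤ L := by
    have hfreq := h (L.toReal + 1)
    rw [hL, Filter.limsup_eq]
    refine le_sInf fun a ha => ?_
    simp only [Set.mem_setOf_eq, Filter.eventually_atTop] at ha
    obtain ⟨N, hN⟩ := ha
    obtain ⟨n, hn, hun⟩ := hfreq N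
    exact le_trans hun (hN n hn)
  have : L < ENNReal.ofReal (L.toReal + 1) := by
    rw [ENNReal.lt_ofReal_iff_toReal_lt hc]
    linarith
  exact absurd (lt_of_lt_of_le this hM) (lt_irrefl _)

lemma freq_gt_of_limsup_eq_top (h : atTop.limsup u = ⊤) {b : ℝ≥0∞} (hb : b ≠ ⊤) :
    ∀ N : ℕ, ∃ n, N ≤ n ∧ b < u n := by
  intro N
  by_contra hc
  push_neg at hc
  have : atTop.limsup u ≤ b := by
    rw [Filter.limsup_eq]
    refine sInf_le ?_
    simp only [Set.mem_setOf_eq, Filter.eventually_atTop]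
    exact ⟨N, hc⟩
  rw [h] at this
  exact hb (top_le_iff.1 this)

end LimInfSup

end LY

namespace LY

/-! ### Dynamics lemmas -/

section Dyn
variable {X : Type*} [MeasurableSpace X] {μ : Measure X} {φ : X → X} {cc : ℝ≥0∞} {F S : Set X}

lemma measurableSet_image_iterate (himg : ∀ F : Set X, MeasurableSet F → MeasurableSet (φ '' F))
    (hF : MeasurableSet F) : ∀ n : ℕ, MeasurableSet (φ^[n] '' F)
  | 0 => by simpa using hF
  | (n+1) => by
      rw [Function.iterate_succ', Set.image_comp]
      exact himg _ (measurableSet_image_iterate himg hF n)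

lemma measure_preimage_iterate_le (hφ : Measurable φ)
    (hbound' : ∀ F : Set X, MeasurableSet F → μ (φ ⁻¹' F) ≤ cc * μ F)
    (hF : MeasurableSet F) : ∀ s : ℕ, μ (φ^[s] ⁻¹' F) ≤ cc ^ s * μ F
  | 0 => by simp
  | (s+1) => by
      have h1 : φ^[s+1] ⁻¹' F = φ ⁻¹' (φ^[s] ⁻¹' F) := by
        rw [Function.iterate_succ, Set.preimage_comp]
      rw [h1]
      calc μ (φ ⁻¹' (φ^[s] ⁻¹' F)) ≤ cc * μ (φ^[s] ⁻¹' F) :=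
            hbound' _ ((hφ.iterate s) hF)
        _ ≤ cc * (cc ^ s * μ F) := by
            gcongr
            exact measure_preimage_iterate_le hφ hbound' hF s
        _ = cc ^ (s+1) * μ F := by rw [pow_succ]; ring

lemma measure_le_pow_mul_image (himg : ∀ F : Set X, MeasurableSet F → MeasurableSet (φ '' F))
    (hbound' : ∀ F : Set X, MeasurableSet F → μ (φ ⁻¹' F) ≤ cc * μ F)
    (hF : MeasurableSet F) : ∀ s : ℕ, μ F ≤ cc ^ s * μ (φ^[s] '' F)
  | 0 => by simp
  | (s+1) => by
      have base : ∀ A : Set X, MeasurableSet A → μ A ≤ cc * μ (φ '' A) := by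
        intro A hA
        calc μ A ≤ μ (φ ⁻¹' (φ '' A)) := measure_mono (Set.subset_preimage_image _ _)
          _ ≤ cc * μ (φ '' A) := hbound' _ (himg _ hA)
      calc μ F ≤ cc ^ s * μ (φ^[s] '' F) := measure_le_pow_mul_image himg hbound' hF s
        _ ≤ cc ^ s * (cc * μ (φ '' (φ^[s] '' F))) := by
            gcongr
            exact base _ (measurableSet_image_iterate himg hF s)
        _ = cc ^ (s+1) * μ (φ^[s+1] '' F) := by
            rw [Function.iterate_succ', Set.image_comp, pow_succ]; ring

lemma image_image_iterate (a b : ℕ) (S : Set X) :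
    φ^[a] '' (φ^[b] '' S) = φ^[a + b] '' S := by
  rw [← Set.image_comp, ← Function.iterate_add]

lemma preimage_iterate_image_of_le (hinj : Function.Injective φ) {b y : ℕ} (h : b ≤ y)
    (S : Set X) : φ^[y] ⁻¹' (φ^[b] '' S) = φ^[y - b] ⁻¹' S := by
  ext x
  simp only [Set.mem_preimage]
  have hx : φ^[y] x = φ^[b] (φ^[y - b] x) := by
    rw [← Function.iterate_add_apply]
    congr 1
    omega
  rw [hx]
  exact (hinj.iterate b).mem_set_image

lemma preimage_iterate_image_of_ge (hinj : Function.Injective φ) {b y : ℕ} (h : y ≤ b)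
    (S : Set X) : φ^[y] ⁻¹' (φ^[b] '' S) = φ^[b - y] '' S := by
  ext x
  simp only [Set.mem_preimage]
  constructor
  · rintro ⟨s, hs, hsx⟩
    refine ⟨s, hs, ?_⟩
    have : φ^[y] (φ^[b - y] s) = φ^[y] x := by
      rw [← Function.iterate_add_apply]
      have : y + (b - y) = b := by omega
      rw [this, hsx]
    exact (hinj.iterate y) this
  · rintro ⟨s, hs, rfl⟩
    refine ⟨s, hs, ?_⟩
    rw [← Function.iterate_add_apply]
    congr 1
    omega

end Dyn

end LY

namespace LY

/-! ### Luxemburg norm lemmas -/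

section Lux
variable {X : Type*} [MeasurableSpace X] {μ : Measure X} {Φ : ℝ → ℝ≥0∞} {f g : X → ℝ}
  {F : Set X}

lemma luxNorm_le {k : ℝ} (hk : 0 < k) (hint : ∫⁻ x, Φ (f x / k) ∂μ ≤ 1) :
    luxNorm Φ μ f ≤ ENNReal.ofReal k :=
  iInf_le_of_le k (iInf_le_of_le hk (iInf_le _ hint))

lemma le_luxNorm {b : ℝ≥0∞}
    (h : ∀ k : ℝ, 0 < k → (∫⁻ x, Φ (f x / k) ∂μ ≤ 1) → b ≤ ENNReal.ofReal k) :
    b ≤ luxNorm Φ μ f :=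
  le_iInf fun k => le_iInf fun hk => le_iInf fun hint => h k hk hint

lemma luxNorm_lt_iff {b : ℝ≥0∞} :
    luxNorm Φ μ f < b ↔
      ∃ k : ℝ, 0 < k ∧ (∫⁻ x, Φ (f x / k) ∂μ ≤ 1) ∧ ENNReal.ofReal k < b := by
  constructor
  · intro h
    rw [luxNorm, iInf_lt_iff] at h
    obtain ⟨k, hk⟩ := h
    rw [iInf_lt_iff] at hk
    obtain ⟨hk0, hk⟩ := hk
    rw [iInf_lt_iff] at hk
    obtain ⟨hint, hlt⟩ := hk
    exact ⟨k, hk0, hint, hlt⟩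
  · rintro ⟨k, hk0, hint, hlt⟩
    exact lt_of_le_of_lt (luxNorm_le hk0 hint) hlt

lemma indicator_comp (F : Set X) (g : X → X) :
    ((F.indicator fun _ => (1 : ℝ)) ∘ g) = (g ⁻¹' F).indicator fun _ => (1 : ℝ) := by
  funext x
  by_cases h : g x ∈ F <;>
    simp [Function.comp, Set.indicator_of_mem, Set.indicator_of_notMem, h]

lemma lintegral_phi_indicator (hΦ : IsNFunction Φ) (hF : MeasurableSet F) (k : ℝ) :
    ∫⁻ x, Φ ((F.indicator (fun _ => (1 : ℝ)) x) / k) ∂μ = Φ (1 / k) * μ F := by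
  have heq : (fun x => Φ ((F.indicator (fun _ => (1 : ℝ)) x) / k))
      = F.indicator fun _ => Φ (1 / k) := by
    funext x
    by_cases h : x ∈ F <;>
      simp [h, Set.indicator_of_mem, Set.indicator_of_notMem, zero_div, hΦ.map_zero]
  rw [heq, lintegral_indicator hF, setLIntegral_const]

lemma luxNorm_indicator_le (hΦ : IsNFunction Φ) (hF : MeasurableSet F) {k : ℝ} (hk : 0 < k)
    (hμ : μ F ≤ (Φ (1 / k))⁻¹) :
    luxNorm Φ μ (F.indicator fun _ => (1 : ℝ)) ≤ ENNReal.ofReal k := by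
  refine luxNorm_le hk ?_
  rw [lintegral_phi_indicator hΦ hF]
  calc Φ (1 / k) * μ F ≤ Φ (1 / k) * (Φ (1 / k))⁻¹ := by gcongr
    _ ≤ 1 := ENNReal.mul_inv_le_one _

lemma le_luxNorm_indicator (hΦ : IsNFunction Φ) (hF : MeasurableSet F) {δ : ℝ≥0∞}
    (hμ : δ ≤ μ F) {x₀ : ℝ} (hx0 : 0 < x₀) (hgt : δ⁻¹ < Φ x₀) :
    ENNReal.ofReal x₀⁻¹ ≤ luxNorm Φ μ (F.indicator fun _ => (1 : ℝ)) := by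
  refine le_luxNorm fun k hk hint => ?_
  rw [lintegral_phi_indicator hΦ hF] at hint
  have h1 : Φ (1 / k) * δ ≤ 1 := le_trans (by gcongr) hint
  have h2 : Φ (1 / k) ≤ δ⁻¹ := ENNReal.le_inv_iff_mul_le.2 h1
  have h3 : (1 : ℝ) / k ≤ x₀ := by
    by_contra hcon
    push_neg at hcon
    exact absurd (lt_of_le_of_lt h2 hgt) (not_lt.2 (phi_mono hΦ hx0.le hcon.le))
  rw [one_div] at h3
  exact ENNReal.ofReal_le_ofReal (inv_le_of_inv_le₀ hk h3)

lemma luxNorm_smul_le (hΦ : IsNFunction Φ) {a : ℝ} (ha : a ≠ 0) (f : X → ℝ) :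
    luxNorm Φ μ (fun x => a * f x) ≤ ENNReal.ofReal |a| * luxNorm Φ μ f := by
  have habs : 0 < |a| := abs_pos.2 ha
  have hr0 : ENNReal.ofReal |a| ≠ 0 := by
    simp only [ne_eq, ENNReal.ofReal_eq_zero, not_le]
    exact habs
  have hrtop : ENNReal.ofReal |a| ≠ ⊤ := ENNReal.ofReal_ne_top
  have key : ∀ k : ℝ, 0 < k → (∫⁻ x, Φ (f x / k) ∂μ ≤ 1) →
      luxNorm Φ μ (fun x => a * f x) ≤ ENNReal.ofReal (|a| * k) := by
    intro k hk hint
    refine luxNorm_le (by positivity) ?_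
    have heq : ∀ x : X, Φ ((a * f x) / (|a| * k)) = Φ (f x / k) := by
      intro x
      rcases lt_or_gt_of_ne ha with hneg | hpos
      · have h' : (a * f x) / (|a| * k) = -(f x / k) := by
          rw [abs_of_neg hneg]
          field_simp
        rw [h', hΦ.even]
      · have h' : (a * f x) / (|a| * k) = f x / k := by
          rw [abs_of_pos hpos]
          field_simp
        rw [h']
    simpa only [heq] using hint
  rcases eq_or_ne (luxNorm Φ μ f) ⊤ with htop | htop
  · rw [htop, ENNReal.mul_top hr0]; exact le_top
  · by_contra hcon
    push_neg at hcon
    obtain ⟨γ, hγ1, hγ2⟩ := exists_between hcon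
    have h5 : luxNorm Φ μ f < γ / ENNReal.ofReal |a| :=
      (ENNReal.lt_div_iff_mul_lt (Or.inl hr0) (Or.inl hrtop)).2 (by rwa [mul_comm] at hγ1)
    rw [luxNorm_lt_iff] at h5
    obtain ⟨k, hk0, hint, hklt⟩ := h5
    have hlt : ENNReal.ofReal (|a| * k) < γ := by
      rw [ENNReal.ofReal_mul (abs_nonneg a)]
      calc ENNReal.ofReal |a| * ENNReal.ofReal k
          < ENNReal.ofReal |a| * (γ / ENNReal.ofReal |a|) :=
            (ENNReal.mul_lt_mul_iff_right hr0 hrtop).2 hklt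
        _ = γ := ENNReal.mul_div_cancel hr0 hrtop
    exact absurd (lt_of_le_of_lt (key k hk0 hint) hlt) (not_lt.2 hγ2.le)

lemma luxNorm_smul (hΦ : IsNFunction Φ) {a : ℝ} (ha : a ≠ 0) (f : X → ℝ) :
    luxNorm Φ μ (fun x => a * f x) = ENNReal.ofReal |a| * luxNorm Φ μ f := by
  refine le_antisymm (luxNorm_smul_le hΦ ha f) ?_
  have h2 := luxNorm_smul_le (μ := μ) hΦ (inv_ne_zero ha) (fun x => a * f x)
  have heq : (fun x => a⁻¹ * (a * f x)) = f := by
    funext x; field_simp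
  rw [heq] at h2
  calc ENNReal.ofReal |a| * luxNorm Φ μ f
      ≤ ENNReal.ofReal |a| * (ENNReal.ofReal |a⁻¹| * luxNorm Φ μ (fun x => a * f x)) := by
        gcongr
    _ = luxNorm Φ μ (fun x => a * f x) := by
        rw [← mul_assoc, ← ENNReal.ofReal_mul (abs_nonneg a), abs_inv,
          mul_inv_cancel₀ (abs_ne_zero.2 ha), ENNReal.ofReal_one, one_mul]

lemma memOrlicz_sub (hΦ : IsNFunction Φ) (hf : MemOrlicz Φ μ f) (hg : MemOrlicz Φ μ g) :
    MemOrlicz Φ μ (f - g) := by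
  obtain ⟨hfm, kf, hkf, hif⟩ := hf
  obtain ⟨hgm, kg, hkg, hig⟩ := hg
  refine ⟨hfm.sub hgm, min kf kg / 2, by positivity, ?_⟩
  set k := min kf kg / 2 with hkdef
  have hk2f : 2 * k ≤ kf := by
    rw [hkdef]; rw [mul_div_cancel₀]
    · exact min_le_left _ _
    · norm_num
  have hk2g : 2 * k ≤ kg := by
    rw [hkdef]; rw [mul_div_cancel₀]
    · exact min_le_right _ _
    · norm_num
  have hkpos : 0 < k := by positivity
  have hhalf : ((2⁻¹ : ℝ≥0) + (2⁻¹ : ℝ≥0)) = 1 := by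
    rw [← NNReal.coe_inj]; push_cast; norm_num
  have hptw : ∀ x, Φ (k * (f - g) x) ≤ 2⁻¹ * Φ (kf * f x) + 2⁻¹ * Φ (kg * g x) := by
    intro x
    have hconv := hΦ.convex (2 * k * f x) (-(2 * k * g x)) 2⁻¹ 2⁻¹ hhalf
    have harg : ((2⁻¹ : ℝ≥0) : ℝ) * (2 * k * f x) + ((2⁻¹ : ℝ≥0) : ℝ) * (-(2 * k * g x))
        = k * (f - g) x := by
      push_cast
      simp [Pi.sub_apply]
      ring
    rw [harg] at hconv
    refine le_trans hconv ?_
    have hc1 : Φ (2 * k * f x) ≤ Φ (kf * f x) := by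
      calc Φ (2 * k * f x) = Φ |2 * k * f x| := (phi_abs hΦ _).symm
        _ ≤ Φ |kf * f x| := by
            refine phi_mono hΦ (abs_nonneg _) ?_
            calc |2 * k * f x| = |2 * k| * |f x| := abs_mul _ _
              _ ≤ |kf| * |f x| := by
                  have h2 : |2 * k| ≤ |kf| := by
                    rw [abs_of_pos (by positivity : (0:ℝ) < 2 * k), abs_of_pos hkf]
                    exact hk2f
                  exact mul_le_mul_of_nonneg_right h2 (abs_nonneg _)
              _ = |kf * f x| := (abs_mul _ _).symm
        _ = Φ (kf * f x) := phi_abs hΦ _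
    have hc2 : Φ (-(2 * k * g x)) ≤ Φ (kg * g x) := by
      rw [hΦ.even]
      calc Φ (2 * k * g x) = Φ |2 * k * g x| := (phi_abs hΦ _).symm
        _ ≤ Φ |kg * g x| := by
            refine phi_mono hΦ (abs_nonneg _) ?_
            calc |2 * k * g x| = |2 * k| * |g x| := abs_mul _ _
              _ ≤ |kg| * |g x| := by
                  have h2 : |2 * k| ≤ |kg| := by
                    rw [abs_of_pos (by positivity : (0:ℝ) < 2 * k), abs_of_pos hkg]
                    exact hk2g
                  exact mul_le_mul_of_nonneg_right h2 (abs_nonneg _)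
              _ = |kg * g x| := (abs_mul _ _).symm
        _ = Φ (kg * g x) := phi_abs hΦ _
    have : ((2⁻¹ : ℝ≥0) : ℝ≥0∞) = (2⁻¹ : ℝ≥0∞) := by
      simp
    rw [this]
    gcongr
  have hmf : Measurable fun x => Φ (kf * f x) :=
    (phi_measurable hΦ).comp (hfm.const_mul kf)
  have hmg : Measurable fun x => Φ (kg * g x) :=
    (phi_measurable hΦ).comp (hgm.const_mul kg)
  calc ∫⁻ x, Φ (k * (f - g) x) ∂μ
      ≤ ∫⁻ x, (2⁻¹ * Φ (kf * f x) + 2⁻¹ * Φ (kg * g x)) ∂μ := lintegral_mono hptw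
    _ = 2⁻¹ * ∫⁻ x, Φ (kf * f x) ∂μ + 2⁻¹ * ∫⁻ x, Φ (kg * g x) ∂μ := by
        rw [lintegral_add_left (hmf.const_mul _), lintegral_const_mul _ hmf,
          lintegral_const_mul _ hmg]
    _ < ⊤ := by
        refine ENNReal.add_lt_top.2 ⟨?_, ?_⟩ <;>
          exact ENNReal.mul_lt_top (by norm_num) (by assumption)

lemma measure_eq_zero_of_indicator_ae
    (h : (F.indicator fun _ => (1 : ℝ)) =ᵐ[μ] fun _ => (0 : ℝ)) : μ F = 0 := by
  have h2 : μ {x | ¬ (F.indicator (fun _ => (1 : ℝ)) x = 0)} = 0 := by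
    exact h
  have hFeq : F = {x | ¬ (F.indicator (fun _ => (1 : ℝ)) x = 0)} := by
    ext x
    by_cases hx : x ∈ F <;> simp [hx]
  rw [hFeq]
  exact h2

end Lux

end LY

namespace LY

/-! ### Converting between measure smallness and the conditions of the theorem -/

section Cond
variable {X : Type*} [MeasurableSpace X] {μ : Measure X} {Φ : ℝ → ℝ≥0∞} {ν : ℕ → ℝ≥0∞}
  {φ : X → X} {G : Set X}

lemma limsup_youngInv_top (hΦ : IsNFunction Φ)
    (h : ∀ ε : ℝ≥0∞, 0 < ε → ∀ N : ℕ, ∃ n, N ≤ n ∧ ν n ≤ ε) :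
    atTop.limsup (fun n => youngInv Φ (1 / ν n)) = ⊤ := by
  refine limsup_eq_top_of fun M N => ?_
  rcases le_or_gt M 0 with hM | hM
  · obtain ⟨n, hn, _⟩ := h 1 one_pos N
    exact ⟨n, hn, by simp [ENNReal.ofReal_eq_zero.2 hM]⟩
  · have hεpos : (0 : ℝ≥0∞) < (Φ M + 1)⁻¹ :=
      ENNReal.inv_pos.2 (by simp [(hΦ.lt_top M).ne])
    obtain ⟨n, hn, hνn⟩ := h _ hεpos N
    refine ⟨n, hn, le_youngInv hΦ hM.le ?_⟩
    have h1 : Φ M + 1 ≤ (ν n)⁻¹ := by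
      have h2 := ENNReal.inv_le_inv' hνn
      rwa [inv_inv] at h2
    rw [one_div]
    exact le_trans le_self_add h1

lemma freq_small_of_limsup_youngInv_top (hΦ : IsNFunction Φ)
    (h : atTop.limsup (fun n => youngInv Φ (1 / ν n)) = ⊤) :
    ∀ ε : ℝ≥0∞, 0 < ε → ∀ N : ℕ, ∃ n, N ≤ n ∧ ν n ≤ ε := by
  intro ε hε N
  rcases eq_or_ne ε ⊤ with rfl | hεtop
  · exact ⟨N, le_rfl, le_top⟩
  · obtain ⟨x₀, _, hx₀pos, hgt⟩ := exists_phi_gt hΦ ε⁻¹ (ENNReal.inv_ne_top.2 hε.ne') 0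
    obtain ⟨n, hn, hun⟩ := freq_gt_of_limsup_eq_top h (b := ENNReal.ofReal x₀)
      ENNReal.ofReal_ne_top N
    refine ⟨n, hn, ?_⟩
    by_contra hc
    push_neg at hc
    have h1 : 1 / ν n ≤ ε⁻¹ := by
      rw [one_div]
      exact ENNReal.inv_le_inv' hc.le
    exact absurd hun (not_lt.2 (youngInv_le Φ hx₀pos.le (lt_of_le_of_lt h1 hgt)))

lemma exists_ofReal_le {ε : ℝ≥0∞} (hε : 0 < ε) : ∃ k : ℝ, 0 < k ∧ ENNReal.ofReal k ≤ ε := by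
  rcases eq_or_ne ε ⊤ with rfl | hεtop
  · exact ⟨1, one_pos, le_top⟩
  · refine ⟨ε.toReal, ENNReal.toReal_pos hε.ne' hεtop, ?_⟩
    rw [ENNReal.ofReal_toReal hεtop]

lemma liminf_luxNorm_indicator_eq_zero (hΦ : IsNFunction Φ) (hφ : Measurable φ)
    (hG : MeasurableSet G)
    (h : ∀ ε : ℝ≥0∞, 0 < ε → ∀ N : ℕ, ∃ n, N ≤ n ∧ μ (φ^[n] ⁻¹' G) ≤ ε) :
    atTop.liminf (fun n : ℕ => luxNorm Φ μ ((G.indicator fun _ => (1:ℝ)) ∘ φ^[n])) = 0 := by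
  refine liminf_eq_zero_of fun ε hε N => ?_
  obtain ⟨k, hk0, hkε⟩ := exists_ofReal_le hε
  have hΦpos : (0 : ℝ≥0∞) < (Φ (1 / k))⁻¹ := ENNReal.inv_pos.2 (hΦ.lt_top _).ne
  obtain ⟨n, hn, hνn⟩ := h _ hΦpos N
  refine ⟨n, hn, ?_⟩
  rw [indicator_comp]
  exact le_trans (luxNorm_indicator_le hΦ ((hφ.iterate n) hG) hk0 hνn) hkε

lemma limsup_luxNorm_indicator_pos (hΦ : IsNFunction Φ) (hφ : Measurable φ)
    (hG : MeasurableSet G) {δ : ℝ≥0∞} (hδ : 0 < δ)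
    (h : ∀ N : ℕ, ∃ n, N ≤ n ∧ δ ≤ μ (φ^[n] ⁻¹' G)) :
    0 < atTop.limsup (fun n : ℕ => luxNorm Φ μ ((G.indicator fun _ => (1:ℝ)) ∘ φ^[n])) := by
  obtain ⟨x₀, _, hx₀pos, hgt⟩ := exists_phi_gt hΦ δ⁻¹ (ENNReal.inv_ne_top.2 hδ.ne') 0
  refine limsup_pos_of (δ := ENNReal.ofReal x₀⁻¹)
    (ENNReal.ofReal_pos.2 (inv_pos.2 hx₀pos)) fun N => ?_
  obtain ⟨n, hn, hν⟩ := h N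
  refine ⟨n, hn, ?_⟩
  rw [indicator_comp]
  exact le_luxNorm_indicator hΦ ((hφ.iterate n) hG) hν hx₀pos hgt

end Cond

end LY

namespace LY

section Impls
variable {X : Type*} [MeasurableSpace X] {μ : Measure X} [IsFiniteMeasure μ]
  {Φ : ℝ → ℝ≥0∞} {φ : X → X} {cc : ℝ≥0∞}

/-- (1) ⇒ (2) -/
lemma e12 (hΦ : IsNFunction Φ) (h : CompLiYorkeChaotic Φ μ φ) :
    ∃ f : X → ℝ, MemOrlicz Φ μ f ∧ ¬ f =ᵐ[μ] (fun _ => (0 : ℝ)) ∧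
      atTop.liminf (fun n : ℕ => luxNorm Φ μ (f ∘ φ^[n])) = 0 := by
  obtain ⟨S, hunc, hmem, hdist, hpairs⟩ := h
  have hnt : S.Nontrivial := by
    by_contra hc
    exact hunc (Set.not_nontrivial_iff.1 hc).countable
  obtain ⟨f, hf, g, hg, hfg⟩ := hnt
  have hae : ¬ f =ᵐ[μ] g := hdist f hf g hg hfg
  obtain ⟨hlim, -⟩ := hpairs f hf g hg hae
  refine ⟨f - g, memOrlicz_sub hΦ (hmem f hf) (hmem g hg), ?_, hlim⟩
  intro hcon
  apply hae
  filter_upwards [hcon] with x hx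
  have hx' : f x - g x = 0 := hx
  linarith

/-- (2) ⇒ (3) -/
lemma e23 (hΦ : IsNFunction Φ) (hφ : Measurable φ)
    (h : ∃ f : X → ℝ, MemOrlicz Φ μ f ∧ ¬ f =ᵐ[μ] (fun _ => (0 : ℝ)) ∧
      atTop.liminf (fun n : ℕ => luxNorm Φ μ (f ∘ φ^[n])) = 0) :
    ∃ F : Set X, MeasurableSet F ∧ 0 < μ F ∧ μ F < ⊤ ∧
      atTop.limsup (fun n : ℕ => youngInv Φ (1 / μ (φ^[n] ⁻¹' F))) = ⊤ := by
  obtain ⟨f, ⟨hfm, -⟩, hne, hlim⟩ := h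
  have hpos : μ {x | f x ≠ 0} ≠ 0 := by
    intro hc
    apply hne
    have : ∀ᵐ x ∂μ, f x = 0 := by
      rw [ae_iff]
      simpa using hc
    exact this
  have hsub : {x | f x ≠ 0} ⊆ ⋃ m : ℕ, {x | 1 / (m + 1 : ℝ) ≤ |f x|} := by
    intro x hx
    have habs : 0 < |f x| := abs_pos.2 hx
    obtain ⟨m, hm⟩ := exists_nat_one_div_lt habs
    exact Set.mem_iUnion.2 ⟨m, hm.le⟩
  have hexm : ∃ m : ℕ, μ {x | 1 / (m + 1 : ℝ) ≤ |f x|} ≠ 0 := by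
    by_contra hc
    push_neg at hc
    have : μ (⋃ m : ℕ, {x | 1 / (m + 1 : ℝ) ≤ |f x|}) = 0 :=
      measure_iUnion_null_iff.2 hc
    exact hpos (measure_mono_null hsub this)
  obtain ⟨m, hm⟩ := hexm
  set ε₀ : ℝ := 1 / (m + 1 : ℝ) with hε₀
  have hε₀pos : 0 < ε₀ := by positivity
  set F : Set X := {x | ε₀ ≤ |f x|} with hFdef
  have hFmeas : MeasurableSet F := measurableSet_le measurable_const hfm.abs
  refine ⟨F, hFmeas, pos_iff_ne_zero.2 hm, measure_lt_top μ _, ?_⟩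
  refine limsup_youngInv_top hΦ ?_
  intro ε hε N
  rcases eq_or_ne ε ⊤ with rfl | hεtop
  · exact ⟨N, le_rfl, le_top⟩
  obtain ⟨x₀, -, hx₀pos, hgt⟩ := exists_phi_gt hΦ ε⁻¹ (ENNReal.inv_ne_top.2 hε.ne') 0
  set δ : ℝ := ε₀ / x₀ with hδdef
  have hδpos : 0 < δ := by positivity
  obtain ⟨n, hn, hsm⟩ := freq_le_of_liminf_eq_zero hlim (ENNReal.ofReal (δ / 2))
    (ENNReal.ofReal_pos.2 (by positivity)) N
  refine ⟨n, hn, ?_⟩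
  have hlt : luxNorm Φ μ (f ∘ φ^[n]) < ENNReal.ofReal δ :=
    lt_of_le_of_lt hsm (ENNReal.ofReal_lt_ofReal_iff hδpos |>.2 (by linarith))
  rw [luxNorm_lt_iff] at hlt
  obtain ⟨k, hk0, hint, hklt⟩ := hlt
  have hkδ : k < δ := by
    have := (ENNReal.ofReal_lt_ofReal_iff hδpos).1 hklt
    exact this
  -- Chebyshev
  have hmeasint : AEMeasurable (fun x => Φ ((f ∘ φ^[n]) x / k)) μ :=
    ((phi_measurable hΦ).comp ((hfm.comp (hφ.iterate n)).div_const k)).aemeasurable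
  have hsubset : (φ^[n] ⁻¹' F) ⊆ {x | Φ (ε₀ / k) ≤ Φ ((f ∘ φ^[n]) x / k)} := by
    intro x hx
    have hx' : ε₀ ≤ |f (φ^[n] x)| := hx
    have h1 : Φ (ε₀ / k) ≤ Φ (|f (φ^[n] x)| / k) :=
      phi_mono hΦ (by positivity) (by gcongr)
    have h2 : Φ (|f (φ^[n] x)| / k) = Φ ((f ∘ φ^[n]) x / k) := by
      have : |f (φ^[n] x)| / k = |f (φ^[n] x) / k| := by
        rw [abs_div, abs_of_pos hk0]
      rw [this, phi_abs hΦ, Function.comp_apply]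
    exact le_trans h1 (le_of_eq h2)
  have hcheb := mul_meas_ge_le_lintegral₀ hmeasint (Φ (ε₀ / k))
  have hbound1 : Φ (ε₀ / k) * μ (φ^[n] ⁻¹' F) ≤ 1 := by
    calc Φ (ε₀ / k) * μ (φ^[n] ⁻¹' F)
        ≤ Φ (ε₀ / k) * μ {x | Φ (ε₀ / k) ≤ Φ ((f ∘ φ^[n]) x / k)} := by
          gcongr

      _ ≤ ∫⁻ x, Φ ((f ∘ φ^[n]) x / k) ∂μ := hcheb
      _ ≤ 1 := hint
  have hμle : μ (φ^[n] ⁻¹' F) ≤ (Φ (ε₀ / k))⁻¹ :=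
    ENNReal.le_inv_iff_mul_le.2 (by rwa [mul_comm] at hbound1)
  have hx0k : x₀ ≤ ε₀ / k := by
    rw [le_div_iff₀ hk0]
    have h3 : k * x₀ < ε₀ := (lt_div_iff₀ hx₀pos).1 (hδdef ▸ hkδ)
    linarith
  have hΦge : Φ x₀ ≤ Φ (ε₀ / k) := phi_mono hΦ hx₀pos.le hx0k
  calc μ (φ^[n] ⁻¹' F) ≤ (Φ (ε₀ / k))⁻¹ := hμle
    _ ≤ (Φ x₀)⁻¹ := ENNReal.inv_le_inv' hΦge
    _ ≤ ε := by
        have := ENNReal.inv_le_inv' hgt.le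
        rwa [inv_inv] at this

end Impls

end LY

namespace LY

section Constr
variable {X : Type*} [MeasurableSpace X] {μ : Measure X} [IsFiniteMeasure μ]
  {Φ : ℝ → ℝ≥0∞} {φ : X → X} {cc : ℝ≥0∞}

lemma tsum_geom_add (m : ℕ) :
    ∑' k : ℕ, (2 : ℝ≥0∞)⁻¹ ^ (k + m) = (2 : ℝ≥0∞)⁻¹ ^ m * 2 := by
  have h2 : ∑' k : ℕ, (2 : ℝ≥0∞)⁻¹ ^ k = 2 := by
    rw [ENNReal.tsum_geometric, ENNReal.one_sub_inv_two, inv_inv]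
  calc ∑' k : ℕ, (2 : ℝ≥0∞)⁻¹ ^ (k + m)
      = ∑' k : ℕ, (2 : ℝ≥0∞)⁻¹ ^ k * (2 : ℝ≥0∞)⁻¹ ^ m := by
        congr 1; funext k; rw [pow_add]
    _ = (∑' k : ℕ, (2 : ℝ≥0∞)⁻¹ ^ k) * (2 : ℝ≥0∞)⁻¹ ^ m := ENNReal.tsum_mul_right
    _ = (2 : ℝ≥0∞)⁻¹ ^ m * 2 := by rw [h2, mul_comm]

lemma inv_nat_le_inv_pow (K : ℕ) : (2:ℝ≥0∞)⁻¹ ^ (K+1) ≤ (K:ℝ≥0∞)⁻¹ := by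
  rw [← ENNReal.inv_pow]
  apply ENNReal.inv_le_inv'
  calc (K : ℝ≥0∞) ≤ ((2^(K+1) : ℕ) : ℝ≥0∞) := by
        exact_mod_cast Nat.le_of_lt (Nat.lt_two_pow_self (n := K)) |>.trans
          (Nat.pow_le_pow_right (by norm_num) (Nat.le_succ K))
    _ = (2:ℝ≥0∞) ^ (K+1) := by push_cast; ring

/-- land `2⁻¹ ^ j * 2` below any positive `ε` for large `j`. -/
lemma pow2_le {ε : ℝ≥0∞} (hε : 0 < ε) : ∃ J : ℕ, ∀ j : ℕ, J ≤ j → (2:ℝ≥0∞)⁻¹ ^ j * 2 ≤ ε := by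
  obtain ⟨K, hK⟩ := ENNReal.exists_inv_nat_lt hε.ne'
  refine ⟨K + 2, fun j hj => ?_⟩
  have h1 : (2:ℝ≥0∞)⁻¹ ^ j * 2 ≤ (2:ℝ≥0∞)⁻¹ ^ (K + 2) * 2 := by
    have := pow_le_pow_of_le_one zero_le (ENNReal.inv_le_one.2 one_le_two) hj
    exact mul_le_mul' this le_rfl
  refine le_trans h1 ?_
  have h2 : (2:ℝ≥0∞)⁻¹ ^ (K + 2) * 2 = (2:ℝ≥0∞)⁻¹ ^ (K + 1) := by
    rw [pow_succ, mul_assoc, ENNReal.inv_mul_cancel (by norm_num) (by norm_num), mul_one]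
  rw [h2]
  exact le_trans (inv_nat_le_inv_pow K) hK.le

/-- The key "stage 1" construction: from a set with frequently-small preimages produce a
subset of it (of positive measure) which moreover has frequently-small forward images. -/
lemma stage1 (hφ : Measurable φ) (hinj : Function.Injective φ)
    (himg : ∀ F : Set X, MeasurableSet F → MeasurableSet (φ '' F))
    (hcc1 : 1 ≤ cc) (hcctop : cc ≠ ⊤)
    (hbound' : ∀ F : Set X, MeasurableSet F → μ (φ ⁻¹' F) ≤ cc * μ F)
    {F : Set X} (hF : MeasurableSet F) (hF0 : 0 < μ F)
    (P : ∀ ε : ℝ≥0∞, 0 < ε → ∀ N : ℕ, ∃ n, N ≤ n ∧ μ (φ^[n] ⁻¹' F) ≤ ε) :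
    ∃ G : Set X, MeasurableSet G ∧ G ⊆ F ∧ 0 < μ G ∧
      (∀ ε : ℝ≥0∞, 0 < ε → ∀ N : ℕ, ∃ m, N ≤ m ∧ μ (φ^[m] '' G) ≤ ε) := by
  have hcc0 : cc ≠ 0 := by
    intro hc; rw [hc] at hcc1; exact absurd hcc1 (by simp)
  set Opl : Set X := ⋃ d : ℕ, φ^[d] '' F with hOpl
  set Acc : ℕ → Set X := fun ℓ => ⋃ d : ℕ, ⋃ _ : d ≤ ℓ, φ^[d] '' F with hAcc
  have hAccMeas : ∀ ℓ, MeasurableSet (Acc ℓ) := fun ℓ =>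
    MeasurableSet.iUnion fun d => MeasurableSet.iUnion fun _ =>
      measurableSet_image_iterate himg hF d
  have hOplMeas : MeasurableSet Opl :=
    MeasurableSet.iUnion fun d => measurableSet_image_iterate himg hF d
  have hcov : ∀ η : ℝ≥0∞, 0 < η → ∃ ℓ : ℕ, μ (Opl \ Acc ℓ) ≤ η := by
    intro η hη
    have hanti : Antitone fun ℓ => Opl \ Acc ℓ := by
      intro i j hij
      apply Set.diff_subset_diff_right
      intro x hx
      simp only [hAcc, Set.mem_iUnion] at hx ⊢
      obtain ⟨d, hd, hxd⟩ := hx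
      exact ⟨d, hd.trans hij, hxd⟩
    have hinter : ⋂ ℓ : ℕ, (Opl \ Acc ℓ) = ∅ := by
      rw [← Set.diff_iUnion]
      refine Set.diff_eq_empty.2 ?_
      intro x hx
      simp only [hOpl, Set.mem_iUnion] at hx
      obtain ⟨d, hxd⟩ := hx
      simp only [hAcc, Set.mem_iUnion]
      exact ⟨d, d, le_rfl, hxd⟩
    have htend := MeasureTheory.tendsto_measure_iInter_atTop (μ := μ)
      (fun ℓ => (hOplMeas.diff (hAccMeas ℓ)).nullMeasurableSet) hanti
      ⟨0, (measure_lt_top μ _).ne⟩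
    rw [hinter, measure_empty] at htend
    have hev := htend.eventually_lt_const hη
    rw [Filter.eventually_atTop] at hev
    obtain ⟨ℓ, hℓ⟩ := hev
    exact ⟨ℓ, (hℓ ℓ le_rfl).le⟩
  -- choose covering lengths
  have hLch : ∀ k : ℕ, ∃ ℓ : ℕ, μ (Opl \ Acc ℓ) ≤ ((k : ℝ≥0∞) + 1)⁻¹ := fun k =>
    hcov _ (ENNReal.inv_pos.2 (by simp))
  choose L hL using hLch
  -- window targets
  set w : ℕ → ℝ≥0∞ := fun k => μ F * (2 : ℝ≥0∞)⁻¹ ^ (k + 2) / ((L k : ℝ≥0∞) + 1) with hw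
  have hwpos : ∀ k, 0 < w k := by
    intro k
    apply ENNReal.div_pos
    · exact (ENNReal.mul_pos hF0.ne' (pow_ne_zero _ (by norm_num))).ne'
    · simp [ENNReal.add_ne_top]
  have hδpos : ∀ k, 0 < (cc ^ L k)⁻¹ * w k := fun k =>
    ENNReal.mul_pos (ENNReal.inv_ne_zero.2 (ENNReal.pow_ne_top hcctop)) (hwpos k).ne'
  -- choose deep smallness times
  have hnch : ∀ k : ℕ, ∃ n, k ≤ n ∧ μ (φ^[n] ⁻¹' F) ≤ (cc ^ L k)⁻¹ * w k := fun k =>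
    P _ (hδpos k) k
  choose n hn1 hn2 using hnch
  -- window bound
  have hwin : ∀ k s : ℕ, s ≤ L k → μ (φ^[n k + s] ⁻¹' F) ≤ w k := by
    intro k s hs
    have h1 : φ^[n k + s] ⁻¹' F = φ^[s] ⁻¹' (φ^[n k] ⁻¹' F) := by
      rw [Function.iterate_add, Set.preimage_comp]
    calc μ (φ^[n k + s] ⁻¹' F) = μ (φ^[s] ⁻¹' (φ^[n k] ⁻¹' F)) := by rw [h1]
      _ ≤ cc ^ s * μ (φ^[n k] ⁻¹' F) :=
          measure_preimage_iterate_le hφ hbound' ((hφ.iterate (n k)) hF) s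
      _ ≤ cc ^ L k * ((cc ^ L k)⁻¹ * w k) :=
          mul_le_mul' (pow_le_pow_right₀ hcc1 hs) (hn2 k)
      _ = w k := by
          rw [← mul_assoc, ENNReal.mul_inv_cancel (pow_ne_zero _ hcc0)
            (ENNReal.pow_ne_top hcctop), one_mul]
  set Bad : Set X := ⋃ k : ℕ, ⋃ s ∈ Finset.range (L k + 1), φ^[n k + s] ⁻¹' F with hBadDef
  have hBadMeas : MeasurableSet Bad :=
    MeasurableSet.iUnion fun k => MeasurableSet.iUnion fun s =>
      MeasurableSet.iUnion fun _ => (hφ.iterate _) hF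
  have hBadk : ∀ k, μ (⋃ s ∈ Finset.range (L k + 1), φ^[n k + s] ⁻¹' F)
      ≤ μ F * (2 : ℝ≥0∞)⁻¹ ^ (k + 2) := by
    intro k
    calc μ (⋃ s ∈ Finset.range (L k + 1), φ^[n k + s] ⁻¹' F)
        ≤ ∑ s ∈ Finset.range (L k + 1), μ (φ^[n k + s] ⁻¹' F) :=
          measure_biUnion_finset_le _ _
      _ ≤ (Finset.range (L k + 1)).card • w k :=
          Finset.sum_le_card_nsmul _ _ _ (fun s hs =>
            hwin k s (by simpa [Nat.lt_succ_iff] using Finset.mem_range.1 hs))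
      _ = ((L k : ℝ≥0∞) + 1) * w k := by
          rw [Finset.card_range, nsmul_eq_mul]
          push_cast
          ring
      _ ≤ μ F * (2 : ℝ≥0∞)⁻¹ ^ (k + 2) := by
          rw [hw]
          exact ENNReal.mul_div_le
  have hBad : μ Bad ≤ μ F * (2 : ℝ≥0∞)⁻¹ := by
    calc μ Bad ≤ ∑' k : ℕ, μ (⋃ s ∈ Finset.range (L k + 1), φ^[n k + s] ⁻¹' F) :=
          measure_iUnion_le _
      _ ≤ ∑' k : ℕ, μ F * (2 : ℝ≥0∞)⁻¹ ^ (k + 2) := ENNReal.tsum_le_tsum hBadk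
      _ = μ F * ∑' k : ℕ, (2 : ℝ≥0∞)⁻¹ ^ (k + 2) := ENNReal.tsum_mul_left
      _ = μ F * ((2 : ℝ≥0∞)⁻¹ ^ 2 * 2) := by rw [tsum_geom_add]
      _ = μ F * (2 : ℝ≥0∞)⁻¹ := by
          congr 1
          rw [pow_two, mul_assoc, ENNReal.inv_mul_cancel (by norm_num) (by norm_num), mul_one]
  set G : Set X := F ∩ (Opl \ Bad) with hGdef
  have hGmeas : MeasurableSet G := hF.inter (hOplMeas.diff hBadMeas)
  have hGsub : G ⊆ F := Set.inter_subset_left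
  have hFsubOpl : F ⊆ Opl := fun x hx => Set.mem_iUnion.2 ⟨0, by simpa using hx⟩
  have hG0 : 0 < μ G := by
    rw [pos_iff_ne_zero]
    intro hc
    have hsplit : F ⊆ G ∪ Bad := by
      intro x hx
      by_cases hxB : x ∈ Bad
      · exact Or.inr hxB
      · exact Or.inl ⟨hx, hFsubOpl hx, hxB⟩
    have h1 : μ F ≤ μ G + μ Bad := le_trans (measure_mono hsplit) (measure_union_le _ _)
    rw [hc, zero_add] at h1
    have h2 : μ F * 2⁻¹ < μ F := by
      have h3 := ENNReal.half_lt_self hF0.ne' (measure_lt_top μ F).ne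
      rwa [ENNReal.div_eq_inv_mul, mul_comm] at h3
    exact absurd (le_trans h1 hBad) (not_le.2 h2)
  refine ⟨G, hGmeas, hGsub, hG0, ?_⟩
  -- forward smallness
  have hfwd : ∀ k : ℕ, μ (φ^[n k + L k] '' G) ≤ ((k : ℝ≥0∞) + 1)⁻¹ := by
    intro k
    have hsub2 : φ^[n k + L k] '' G ⊆ Opl \ Acc (L k) := by
      rintro y ⟨a, ⟨haF, haO, haB⟩, rfl⟩
      constructor
      · obtain ⟨d, w', hwF, hwa⟩ : ∃ d w', w' ∈ F ∧ φ^[d] w' = a := by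
          have := haO
          simp only [hOpl, Set.mem_iUnion] at this
          obtain ⟨d, w', hwF, hwa⟩ := this
          exact ⟨d, w', hwF, hwa⟩
        refine Set.mem_iUnion.2 ⟨n k + L k + d, ?_⟩
        exact ⟨w', hwF, by rw [← hwa, ← Function.iterate_add_apply]⟩
      · intro hy
        simp only [hAcc, Set.mem_iUnion] at hy
        obtain ⟨d, hd, w', hwF, hwy⟩ := hy
        apply haB
        have hkey : φ^[d] (φ^[n k + (L k - d)] a) = φ^[d] w' := by
          rw [← Function.iterate_add_apply]
          have harith : d + (n k + (L k - d)) = n k + L k := by omega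
          rw [harith]
          exact hwy.symm
        have ha2 : φ^[n k + (L k - d)] a = w' := (hinj.iterate d) hkey
        rw [hBadDef]
        refine Set.mem_iUnion.2 ⟨k, Set.mem_iUnion.2 ⟨L k - d, Set.mem_iUnion.2
          ⟨Finset.mem_range.2 (by omega), ?_⟩⟩⟩
        rw [Set.mem_preimage, ha2]
        exact hwF
    exact le_trans (measure_mono hsub2) (hL k)
  intro ε hε N
  obtain ⟨K0, hK0⟩ := ENNReal.exists_inv_nat_lt hε.ne'
  set k := max N K0 with hkdef
  refine ⟨n k + L k, le_trans (le_trans (le_max_left _ _) (hn1 k)) (Nat.le_add_right _ _), ?_⟩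
  refine le_trans (hfwd k) ?_
  have h1 : (K0 : ℝ≥0∞) ≤ (k : ℝ≥0∞) + 1 := by
    have : (K0 : ℕ) ≤ k + 1 := le_trans (le_max_right N K0) (Nat.le_succ _)
    exact_mod_cast this
  exact le_trans (ENNReal.inv_le_inv' h1) hK0.le

end Constr

end LY

namespace LY

section Constr2
variable {X : Type*} [MeasurableSpace X] {μ : Measure X} [IsFiniteMeasure μ]
  {φ : X → X} {cc : ℝ≥0∞}

/-- The "stage 2" construction: from a set with frequently-small forward images produce a
positive-measure subset which moreover has frequently-small preimages. -/
lemma stage2 (hφ : Measurable φ) (hinj : Function.Injective φ)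
    (himg : ∀ F : Set X, MeasurableSet F → MeasurableSet (φ '' F))
    (hcc1 : 1 ≤ cc) (hcctop : cc ≠ ⊤)
    (hbound' : ∀ F : Set X, MeasurableSet F → μ (φ ⁻¹' F) ≤ cc * μ F)
    {G : Set X} (hG : MeasurableSet G) (hG0 : 0 < μ G)
    (Q : ∀ ε : ℝ≥0∞, 0 < ε → ∀ N : ℕ, ∃ m, N ≤ m ∧ μ (φ^[m] '' G) ≤ ε) :
    ∃ E : Set X, MeasurableSet E ∧ E ⊆ G ∧ 0 < μ E ∧
      (∀ ε : ℝ≥0∞, 0 < ε → ∀ N : ℕ, ∃ n, N ≤ n ∧ μ (φ^[n] ⁻¹' E) ≤ ε) := by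
  have hcc0 : cc ≠ 0 := by
    intro hc; rw [hc] at hcc1; exact absurd hcc1 (by simp)
  set Omin : Set X := ⋃ d : ℕ, φ^[d] ⁻¹' G with hOmin
  set Acc : ℕ → Set X := fun ℓ => ⋃ d : ℕ, ⋃ _ : d ≤ ℓ, φ^[d] ⁻¹' G with hAcc
  have hAccMeas : ∀ ℓ, MeasurableSet (Acc ℓ) := fun ℓ =>
    MeasurableSet.iUnion fun d => MeasurableSet.iUnion fun _ => (hφ.iterate d) hG
  have hOminMeas : MeasurableSet Omin :=
    MeasurableSet.iUnion fun d => (hφ.iterate d) hG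
  have hcov : ∀ η : ℝ≥0∞, 0 < η → ∃ ℓ : ℕ, μ (Omin \ Acc ℓ) ≤ η := by
    intro η hη
    have hanti : Antitone fun ℓ => Omin \ Acc ℓ := by
      intro i j hij
      apply Set.diff_subset_diff_right
      intro x hx
      simp only [hAcc, Set.mem_iUnion] at hx ⊢
      obtain ⟨d, hd, hxd⟩ := hx
      exact ⟨d, hd.trans hij, hxd⟩
    have hinter : ⋂ ℓ : ℕ, (Omin \ Acc ℓ) = ∅ := by
      rw [← Set.diff_iUnion]
      refine Set.diff_eq_empty.2 ?_
      intro x hx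
      simp only [hOmin, Set.mem_iUnion] at hx
      obtain ⟨d, hxd⟩ := hx
      simp only [hAcc, Set.mem_iUnion]
      exact ⟨d, d, le_rfl, hxd⟩
    have htend := MeasureTheory.tendsto_measure_iInter_atTop (μ := μ)
      (fun ℓ => (hOminMeas.diff (hAccMeas ℓ)).nullMeasurableSet) hanti
      ⟨0, (measure_lt_top μ _).ne⟩
    rw [hinter, measure_empty] at htend
    have hev := htend.eventually_lt_const hη
    rw [Filter.eventually_atTop] at hev
    obtain ⟨ℓ, hℓ⟩ := hev
    exact ⟨ℓ, (hℓ ℓ le_rfl).le⟩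
  have hLch : ∀ k : ℕ, ∃ ℓ : ℕ, μ (Omin \ Acc ℓ) ≤ ((k : ℝ≥0∞) + 1)⁻¹ := fun k =>
    hcov _ (ENNReal.inv_pos.2 (by simp))
  choose L hL using hLch
  set w : ℕ → ℝ≥0∞ := fun k => μ G * (2 : ℝ≥0∞)⁻¹ ^ (k + 2) / ((L k : ℝ≥0∞) + 1) with hw
  have hwpos : ∀ k, 0 < w k := by
    intro k
    apply ENNReal.div_pos
    · exact (ENNReal.mul_pos hG0.ne' (pow_ne_zero _ (by norm_num))).ne'
    · simp [ENNReal.add_ne_top]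
  have hδpos : ∀ k, 0 < (cc ^ L k)⁻¹ * w k := fun k =>
    ENNReal.mul_pos (ENNReal.inv_ne_zero.2 (ENNReal.pow_ne_top hcctop)) (hwpos k).ne'
  have hmch : ∀ k : ℕ, ∃ m, L k + k ≤ m ∧ μ (φ^[m] '' G) ≤ (cc ^ L k)⁻¹ * w k := fun k =>
    Q _ (hδpos k) (L k + k)
  choose m hm1 hm2 using hmch
  have hwin : ∀ k s : ℕ, s ≤ L k → μ (φ^[m k - s] '' G) ≤ w k := by
    intro k s hs
    have hsm : s ≤ m k := le_trans (le_trans hs (Nat.le_add_right _ _)) (hm1 k)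
    have harith : s + (m k - s) = m k := by omega
    have h1 : φ^[s] '' (φ^[m k - s] '' G) = φ^[m k] '' G := by
      rw [image_image_iterate, harith]
    calc μ (φ^[m k - s] '' G)
        ≤ cc ^ s * μ (φ^[s] '' (φ^[m k - s] '' G)) :=
          measure_le_pow_mul_image himg hbound' (measurableSet_image_iterate himg hG _) s
      _ = cc ^ s * μ (φ^[m k] '' G) := by rw [h1]
      _ ≤ cc ^ L k * ((cc ^ L k)⁻¹ * w k) :=
          mul_le_mul' (pow_le_pow_right₀ hcc1 hs) (hm2 k)
      _ = w k := by
          rw [← mul_assoc, ENNReal.mul_inv_cancel (pow_ne_zero _ hcc0)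
            (ENNReal.pow_ne_top hcctop), one_mul]
  set Bad : Set X := ⋃ k : ℕ, ⋃ s ∈ Finset.range (L k + 1), φ^[m k - s] '' G with hBadDef
  have hBadMeas : MeasurableSet Bad :=
    MeasurableSet.iUnion fun k => MeasurableSet.iUnion fun s =>
      MeasurableSet.iUnion fun _ => measurableSet_image_iterate himg hG _
  have hBadk : ∀ k, μ (⋃ s ∈ Finset.range (L k + 1), φ^[m k - s] '' G)
      ≤ μ G * (2 : ℝ≥0∞)⁻¹ ^ (k + 2) := by
    intro k
    calc μ (⋃ s ∈ Finset.range (L k + 1), φ^[m k - s] '' G)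
        ≤ ∑ s ∈ Finset.range (L k + 1), μ (φ^[m k - s] '' G) :=
          measure_biUnion_finset_le _ _
      _ ≤ (Finset.range (L k + 1)).card • w k :=
          Finset.sum_le_card_nsmul _ _ _ (fun s hs =>
            hwin k s (by simpa [Nat.lt_succ_iff] using Finset.mem_range.1 hs))
      _ = ((L k : ℝ≥0∞) + 1) * w k := by
          rw [Finset.card_range, nsmul_eq_mul]
          push_cast
          ring
      _ ≤ μ G * (2 : ℝ≥0∞)⁻¹ ^ (k + 2) := by
          rw [hw]
          exact ENNReal.mul_div_le
  have hBad : μ Bad ≤ μ G * (2 : ℝ≥0∞)⁻¹ := by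
    calc μ Bad ≤ ∑' k : ℕ, μ (⋃ s ∈ Finset.range (L k + 1), φ^[m k - s] '' G) :=
          measure_iUnion_le _
      _ ≤ ∑' k : ℕ, μ G * (2 : ℝ≥0∞)⁻¹ ^ (k + 2) := ENNReal.tsum_le_tsum hBadk
      _ = μ G * ∑' k : ℕ, (2 : ℝ≥0∞)⁻¹ ^ (k + 2) := ENNReal.tsum_mul_left
      _ = μ G * ((2 : ℝ≥0∞)⁻¹ ^ 2 * 2) := by rw [tsum_geom_add]
      _ = μ G * (2 : ℝ≥0∞)⁻¹ := by
          congr 1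
          rw [pow_two, mul_assoc, ENNReal.inv_mul_cancel (by norm_num) (by norm_num), mul_one]
  set E : Set X := G ∩ (Omin \ Bad) with hEdef
  have hEmeas : MeasurableSet E := hG.inter (hOminMeas.diff hBadMeas)
  have hEsub : E ⊆ G := Set.inter_subset_left
  have hGsubO : G ⊆ Omin := fun x hx => Set.mem_iUnion.2 ⟨0, by simpa using hx⟩
  have hE0 : 0 < μ E := by
    rw [pos_iff_ne_zero]
    intro hc
    have hsplit : G ⊆ E ∪ Bad := by
      intro x hx
      by_cases hxB : x ∈ Bad
      · exact Or.inr hxB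
      · exact Or.inl ⟨hx, hGsubO hx, hxB⟩
    have h1 : μ G ≤ μ E + μ Bad := le_trans (measure_mono hsplit) (measure_union_le _ _)
    rw [hc, zero_add] at h1
    have h2 : μ G * 2⁻¹ < μ G := by
      have h3 := ENNReal.half_lt_self hG0.ne' (measure_lt_top μ G).ne
      rwa [ENNReal.div_eq_inv_mul, mul_comm] at h3
    exact absurd (le_trans h1 hBad) (not_le.2 h2)
  refine ⟨E, hEmeas, hEsub, hE0, ?_⟩
  have hpre : ∀ k : ℕ, μ (φ^[m k] ⁻¹' E) ≤ ((k : ℝ≥0∞) + 1)⁻¹ := by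
    intro k
    have hsub2 : φ^[m k] ⁻¹' E ⊆ Omin \ Acc (L k) := by
      intro x hx
      obtain ⟨hxG, hxO, hxB⟩ := hx
      constructor
      · have := hxO
        simp only [hOmin, Set.mem_iUnion, Set.mem_preimage] at this ⊢
        obtain ⟨d, hd⟩ := this
        refine ⟨d + m k, ?_⟩
        rw [Function.iterate_add_apply]
        exact hd
      · intro hy
        simp only [hAcc, Set.mem_iUnion, Set.mem_preimage] at hy
        obtain ⟨e, he, hxe⟩ := hy
        apply hxB
        have hem : e ≤ m k := le_trans (le_trans he (Nat.le_add_right _ _)) (hm1 k)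
        have hkey : φ^[m k] x ∈ φ^[m k - e] '' G := by
          refine ⟨φ^[e] x, hxe, ?_⟩
          rw [← Function.iterate_add_apply]
          congr 1
          omega
        rw [hBadDef]
        refine Set.mem_iUnion.2 ⟨k, Set.mem_iUnion.2 ⟨e, Set.mem_iUnion.2
          ⟨Finset.mem_range.2 (by omega), hkey⟩⟩⟩
    exact le_trans (measure_mono hsub2) (hL k)
  intro ε hε N
  obtain ⟨K0, hK0⟩ := ENNReal.exists_inv_nat_lt hε.ne'
  set k := max N K0 with hkdef
  refine ⟨m k, le_trans (le_trans (le_max_left _ _) (Nat.le_add_left _ _)) (hm1 k), ?_⟩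
  refine le_trans (hpre k) ?_
  have h1 : (K0 : ℝ≥0∞) ≤ (k : ℝ≥0∞) + 1 := by
    have : (K0 : ℕ) ≤ k + 1 := le_trans (le_max_right N K0) (Nat.le_succ _)
    exact_mod_cast this
  exact le_trans (ENNReal.inv_le_inv' h1) hK0.le

end Constr2

end LY

namespace LY

section Constr3
variable {X : Type*} [MeasurableSpace X] {μ : Measure X} [IsFiniteMeasure μ]
  {φ : X → X} {cc : ℝ≥0∞}

/-- The "stage 3" construction: from a set with frequently-small preimages *and* forward
images, produce a set whose preimages are frequently small but also frequently of measure
at least `μ S`. -/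
lemma stage3 (hφ : Measurable φ) (hinj : Function.Injective φ)
    (himg : ∀ F : Set X, MeasurableSet F → MeasurableSet (φ '' F))
    (hcc1 : 1 ≤ cc) (hcctop : cc ≠ ⊤)
    (hbound' : ∀ F : Set X, MeasurableSet F → μ (φ ⁻¹' F) ≤ cc * μ F)
    {S : Set X} (hS : MeasurableSet S) (hS0 : 0 < μ S)
    (P : ∀ ε : ℝ≥0∞, 0 < ε → ∀ N : ℕ, ∃ n, N ≤ n ∧ μ (φ^[n] ⁻¹' S) ≤ ε)
    (Q : ∀ ε : ℝ≥0∞, 0 < ε → ∀ N : ℕ, ∃ m, N ≤ m ∧ μ (φ^[m] '' S) ≤ ε) :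
    ∃ G : Set X, MeasurableSet G ∧ 0 < μ G ∧
      (∀ ε : ℝ≥0∞, 0 < ε → ∀ N : ℕ, ∃ n, N ≤ n ∧ μ (φ^[n] ⁻¹' G) ≤ ε) ∧
      (∀ N : ℕ, ∃ n, N ≤ n ∧ μ S ≤ μ (φ^[n] ⁻¹' G)) := by
  have hcc0 : cc ≠ 0 := by
    intro hc; rw [hc] at hcc1; exact absurd hcc1 (by simp)
  have hpow0 : ∀ i : ℕ, ((cc ^ i)⁻¹ : ℝ≥0∞) ≠ 0 := fun i =>
    ENNReal.inv_ne_zero.2 (ENNReal.pow_ne_top hcctop)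
  -- step existence
  have hstep : ∀ (k : ℕ) (p : ℕ × ℕ), ∃ q : ℕ × ℕ,
      (p.1 < q.1 ∧ (p.2 + p.1) < q.1 ∧ k + 1 ≤ q.1) ∧
      μ (φ^[q.1] '' S) ≤ (cc ^ (p.2 + p.1))⁻¹ * (2 : ℝ≥0∞)⁻¹ ^ (k + 1) ∧
      ((p.2 + p.1) < q.2 ∧
        μ (φ^[q.2] ⁻¹' S) ≤ (cc ^ q.1)⁻¹ * (4 : ℝ≥0∞)⁻¹ ^ (k + 1)) := by
    intro k p
    obtain ⟨b', hb1, hb2⟩ := Q ((cc ^ (p.2 + p.1))⁻¹ * (2 : ℝ≥0∞)⁻¹ ^ (k + 1))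
      (ENNReal.mul_pos (hpow0 _) (pow_ne_zero _ (by norm_num)))
      (max (max p.1 (p.2 + p.1)) k + 1)
    obtain ⟨t', ht1, ht2⟩ := P ((cc ^ b')⁻¹ * (4 : ℝ≥0∞)⁻¹ ^ (k + 1))
      (ENNReal.mul_pos (hpow0 _) (pow_ne_zero _ (by norm_num)))
      ((p.2 + p.1) + 1)
    refine ⟨(b', t'), ⟨?_, ?_, ?_⟩, hb2, ?_, ht2⟩ <;> omega
  choose step hA hB hC using hstep
  let seq : ℕ → ℕ × ℕ := fun k => Nat.rec ((0 : ℕ), (0 : ℕ)) (fun k ih => step k ih) k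
  let b : ℕ → ℕ := fun k => (seq k).1
  let t : ℕ → ℕ := fun k => (seq k).2
  let y : ℕ → ℕ := fun k => t k + b k
  have hb0 : b 0 = 0 := rfl
  have hseqsucc : ∀ k, seq (k + 1) = step k (seq k) := fun k => rfl
  have hbsucc : ∀ k, b k < b (k + 1) := fun k => (hA k (seq k)).1
  have hylt : ∀ k, y k < b (k + 1) := fun k => (hA k (seq k)).2.1
  have hkb : ∀ k, k + 1 ≤ b (k + 1) := fun k => (hA k (seq k)).2.2
  have hQ2 : ∀ k, μ (φ^[b (k + 1)] '' S) ≤ (cc ^ y k)⁻¹ * (2 : ℝ≥0∞)⁻¹ ^ (k + 1) :=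
    fun k => hB k (seq k)
  have hytlt : ∀ k, y k < t (k + 1) := fun k => (hC k (seq k)).1
  have hP2 : ∀ k, μ (φ^[t (k + 1)] ⁻¹' S) ≤ (cc ^ b (k + 1))⁻¹ * (4 : ℝ≥0∞)⁻¹ ^ (k + 1) :=
    fun k => (hC k (seq k)).2
  have hbmono : Monotone b := monotone_nat_of_le_succ fun k => (hbsucc k).le
  have hymono : Monotone y := monotone_nat_of_le_succ fun k =>
    le_trans (hytlt k).le (Nat.le_add_right _ _)
  have hkleb : ∀ k, k ≤ b k := by
    intro k
    cases k with
    | zero => exact Nat.zero_le _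
    | succ i => exact hkb i
  have hbley : ∀ k, b k ≤ y k := fun k => Nat.le_add_left _ _
  -- the set G
  set G : Set X := ⋃ k : ℕ, φ^[b k] '' S with hGdef
  have hGmeas : MeasurableSet G :=
    MeasurableSet.iUnion fun k => measurableSet_image_iterate himg hS _
  have hSsubG : S ⊆ G := fun x hx => Set.mem_iUnion.2 ⟨0, by
    rw [hb0]
    simpa using hx⟩
  have hG0 : 0 < μ G := lt_of_lt_of_le hS0 (measure_mono hSsubG)
  -- bounds for individual terms
  have hP2' : ∀ j, 1 ≤ j → μ (φ^[t j] ⁻¹' S) ≤ (cc ^ b j)⁻¹ * (4 : ℝ≥0∞)⁻¹ ^ j := by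
    intro j hj
    obtain ⟨i, rfl⟩ : ∃ i, j = i + 1 := ⟨j - 1, by omega⟩
    exact hP2 i
  have hQ2' : ∀ k, 1 ≤ k → μ (φ^[b k] '' S) ≤ (cc ^ y (k - 1))⁻¹ * (2 : ℝ≥0∞)⁻¹ ^ k := by
    intro k hk
    obtain ⟨i, rfl⟩ : ∃ i, k = i + 1 := ⟨k - 1, by omega⟩
    simpa using hQ2 i
  have htermle : ∀ j k, 1 ≤ j → k ≤ j →
      μ (φ^[y j] ⁻¹' (φ^[b k] '' S)) ≤ (4 : ℝ≥0∞)⁻¹ ^ j := by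
    intro j k hj hkj
    have hbk : b k ≤ b j := hbmono hkj
    have hbky : b k ≤ y j := le_trans hbk (hbley j)
    rw [preimage_iterate_image_of_le hinj hbky]
    have harith : y j - b k = t j + (b j - b k) := by
      have := hbley j
      simp only [y] at *
      omega
    rw [harith]
    have hsplit : φ^[t j + (b j - b k)] ⁻¹' S = φ^[b j - b k] ⁻¹' (φ^[t j] ⁻¹' S) := by
      rw [Function.iterate_add, Set.preimage_comp]
    rw [hsplit]
    calc μ (φ^[b j - b k] ⁻¹' (φ^[t j] ⁻¹' S))
        ≤ cc ^ (b j - b k) * μ (φ^[t j] ⁻¹' S) :=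
          measure_preimage_iterate_le hφ hbound' ((hφ.iterate _) hS) _
      _ ≤ cc ^ b j * ((cc ^ b j)⁻¹ * (4 : ℝ≥0∞)⁻¹ ^ j) :=
          mul_le_mul' (pow_le_pow_right₀ hcc1 (by omega)) (hP2' j hj)
      _ = (4 : ℝ≥0∞)⁻¹ ^ j := by
          rw [← mul_assoc, ENNReal.mul_inv_cancel (pow_ne_zero _ hcc0)
            (ENNReal.pow_ne_top hcctop), one_mul]
  have htermgt : ∀ j k, j < k →
      μ (φ^[y j] ⁻¹' (φ^[b k] '' S)) ≤ (2 : ℝ≥0∞)⁻¹ ^ k := by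
    intro j k hjk
    have hk1 : 1 ≤ k := by omega
    have hyjk : y j ≤ y (k - 1) := hymono (by omega)
    have hyb : y j ≤ b k := by
      have h2 : y (k - 1) < b ((k - 1) + 1) := hylt (k - 1)
      have h3 : (k - 1) + 1 = k := by omega
      rw [h3] at h2
      omega
    rw [preimage_iterate_image_of_ge hinj hyb]
    have harith : y j + (b k - y j) = b k := by omega
    calc μ (φ^[b k - y j] '' S)
        ≤ cc ^ y j * μ (φ^[y j] '' (φ^[b k - y j] '' S)) :=
          measure_le_pow_mul_image himg hbound' (measurableSet_image_iterate himg hS _) _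
      _ = cc ^ y j * μ (φ^[b k] '' S) := by rw [image_image_iterate, harith]
      _ ≤ cc ^ y (k - 1) * ((cc ^ y (k - 1))⁻¹ * (2 : ℝ≥0∞)⁻¹ ^ k) :=
          mul_le_mul' (pow_le_pow_right₀ hcc1 hyjk) (hQ2' k hk1)
      _ = (2 : ℝ≥0∞)⁻¹ ^ k := by
          rw [← mul_assoc, ENNReal.mul_inv_cancel (pow_ne_zero _ hcc0)
            (ENNReal.pow_ne_top hcctop), one_mul]
  -- main estimate
  have hmain : ∀ j, 1 ≤ j → μ (φ^[y j] ⁻¹' G) ≤ (2 : ℝ≥0∞)⁻¹ ^ j * 2 := by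
    intro j hj
    have hdecomp : φ^[y j] ⁻¹' G = ⋃ k : ℕ, φ^[y j] ⁻¹' (φ^[b k] '' S) := by
      rw [hGdef, Set.preimage_iUnion]
    have hsubsplit : (⋃ k : ℕ, φ^[y j] ⁻¹' (φ^[b k] '' S)) ⊆
        (⋃ k ∈ Finset.range (j + 1), φ^[y j] ⁻¹' (φ^[b k] '' S)) ∪
          ⋃ i : ℕ, φ^[y j] ⁻¹' (φ^[b (j + 1 + i)] '' S) := by
      intro x hx
      obtain ⟨k, hk⟩ := Set.mem_iUnion.1 hx
      rcases le_or_gt k j with h | h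
      · exact Or.inl (Set.mem_biUnion (Finset.mem_range.2 (by omega)) hk)
      · refine Or.inr (Set.mem_iUnion.2 ⟨k - (j + 1), ?_⟩)
        have : j + 1 + (k - (j + 1)) = k := by omega
        rw [this]
        exact hk
    have hsum1 : μ (⋃ k ∈ Finset.range (j + 1), φ^[y j] ⁻¹' (φ^[b k] '' S))
        ≤ (2 : ℝ≥0∞)⁻¹ ^ j := by
      calc μ (⋃ k ∈ Finset.range (j + 1), φ^[y j] ⁻¹' (φ^[b k] '' S))
          ≤ ∑ k ∈ Finset.range (j + 1), μ (φ^[y j] ⁻¹' (φ^[b k] '' S)) :=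
            measure_biUnion_finset_le _ _
        _ ≤ (Finset.range (j + 1)).card • ((4 : ℝ≥0∞)⁻¹ ^ j) :=
            Finset.sum_le_card_nsmul _ _ _ (fun k hk =>
              htermle j k hj (by simpa [Nat.lt_succ_iff] using Finset.mem_range.1 hk))
        _ = ((j + 1 : ℕ) : ℝ≥0∞) * (4 : ℝ≥0∞)⁻¹ ^ j := by
            rw [Finset.card_range, nsmul_eq_mul]
        _ ≤ (2 : ℝ≥0∞)^ j * (4 : ℝ≥0∞)⁻¹ ^ j := by
            gcongr
            exact_mod_cast Nat.lt_two_pow_self (n := j)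
        _ = (2 : ℝ≥0∞)^ j * ((2 : ℝ≥0∞)⁻¹ ^ j * (2 : ℝ≥0∞)⁻¹ ^ j) := by
            congr 1
            rw [← mul_pow]
            congr 1
            rw [← ENNReal.mul_inv (by norm_num) (by norm_num)]
            norm_num
        _ = (2 : ℝ≥0∞)⁻¹ ^ j := by
            rw [← mul_assoc, ← mul_pow, ENNReal.mul_inv_cancel (by norm_num) (by norm_num),
              one_pow, one_mul]
    have hsum2 : μ (⋃ i : ℕ, φ^[y j] ⁻¹' (φ^[b (j + 1 + i)] '' S))
        ≤ (2 : ℝ≥0∞)⁻¹ ^ j := by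
      calc μ (⋃ i : ℕ, φ^[y j] ⁻¹' (φ^[b (j + 1 + i)] '' S))
          ≤ ∑' i : ℕ, μ (φ^[y j] ⁻¹' (φ^[b (j + 1 + i)] '' S)) := measure_iUnion_le _
        _ ≤ ∑' i : ℕ, (2 : ℝ≥0∞)⁻¹ ^ (j + 1 + i) :=
            ENNReal.tsum_le_tsum (fun i => htermgt j (j + 1 + i) (by omega))
        _ = ∑' i : ℕ, (2 : ℝ≥0∞)⁻¹ ^ (i + (j + 1)) := by
            congr 1
            funext i
            congr 1
            omega
        _ = (2 : ℝ≥0∞)⁻¹ ^ (j + 1) * 2 := tsum_geom_add _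
        _ = (2 : ℝ≥0∞)⁻¹ ^ j := by
            rw [pow_succ, mul_assoc, ENNReal.inv_mul_cancel (by norm_num) (by norm_num),
              mul_one]
    calc μ (φ^[y j] ⁻¹' G)
        ≤ μ ((⋃ k ∈ Finset.range (j + 1), φ^[y j] ⁻¹' (φ^[b k] '' S)) ∪
            ⋃ i : ℕ, φ^[y j] ⁻¹' (φ^[b (j + 1 + i)] '' S)) := by
          rw [hdecomp]
          exact measure_mono hsubsplit
      _ ≤ (2 : ℝ≥0∞)⁻¹ ^ j + (2 : ℝ≥0∞)⁻¹ ^ j :=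
          le_trans (measure_union_le _ _) (add_le_add hsum1 hsum2)
      _ = (2 : ℝ≥0∞)⁻¹ ^ j * 2 := by ring
  refine ⟨G, hGmeas, hG0, ?_, ?_⟩
  · intro ε hε N
    obtain ⟨J, hJ⟩ := pow2_le hε
    set j := max 1 (max N J) with hjdef
    refine ⟨y j, ?_, ?_⟩
    · calc N ≤ j := le_trans (le_max_left _ _) (le_max_right _ _)
        _ ≤ b j := hkleb j
        _ ≤ y j := hbley j
    · exact le_trans (hmain j (le_max_left _ _))
        (hJ j (le_trans (le_max_right _ _) (le_max_right _ _)))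
  · intro N
    refine ⟨b N, hkleb N, ?_⟩
    calc μ S ≤ μ (φ^[b N] ⁻¹' (φ^[b N] '' S)) :=
          measure_mono (Set.subset_preimage_image _ _)
      _ ≤ μ (φ^[b N] ⁻¹' G) := by
          apply measure_mono
          apply Set.preimage_mono
          exact Set.subset_iUnion (fun k => φ^[b k] '' S) N

end Constr3

end LY

namespace LY

section E71
variable {X : Type*} [MeasurableSpace X] {μ : Measure X} [IsFiniteMeasure μ]
  {Φ : ℝ → ℝ≥0∞} {φ : X → X}

/-- (7) ⇒ (1) -/
lemma e71 (hΦ : IsNFunction Φ)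
    (h : ∃ F : Set X, MeasurableSet F ∧ 0 < μ F ∧ μ F < ⊤ ∧
      atTop.liminf (fun n : ℕ =>
        luxNorm Φ μ ((F.indicator fun _ => (1 : ℝ)) ∘ φ^[n])) = 0 ∧
      0 < atTop.limsup (fun n : ℕ =>
        luxNorm Φ μ ((F.indicator fun _ => (1 : ℝ)) ∘ φ^[n]))) :
    CompLiYorkeChaotic Φ μ φ := by
  obtain ⟨F, hF, hF0, hFtop, hliminf, hlimsup⟩ := h
  set ind : X → ℝ := F.indicator fun _ => (1 : ℝ) with hind
  set S : Set (X → ℝ) := Set.range (fun t : ℝ => fun x => t * ind x) with hSdef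
  obtain ⟨x₀, hx₀⟩ : F.Nonempty := MeasureTheory.nonempty_of_measure_ne_zero hF0.ne'
  have hinj2 : Function.Injective (fun t : ℝ => fun x : X => t * ind x) := by
    intro s t hst
    have h2 := congrFun hst x₀
    simpa [hind, Set.indicator_of_mem hx₀] using h2
  have hindm : Measurable ind := measurable_const.indicator hF
  -- helper: if two members are distinct scalars, the indicator would have to vanish a.e.
  have hdistinct : ∀ s t : ℝ, s ≠ t →
      ¬ (fun x => s * ind x) =ᵐ[μ] (fun x => t * ind x) := by
    intro s t hst hae
    have hzero : ind =ᵐ[μ] fun _ => (0 : ℝ) := by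
      filter_upwards [hae] with x hx
      have hx' : s * ind x = t * ind x := hx
      by_contra hne
      exact hst (mul_right_cancel₀ hne hx')
    exact absurd (measure_eq_zero_of_indicator_ae hzero) hF0.ne'
  refine ⟨S, ?_, ?_, ?_, ?_⟩
  · intro hc
    have h2 := hc.preimage hinj2
    rw [Set.preimage_range] at h2
    exact Cardinal.not_countable_real h2
  · rintro f ⟨t, rfl⟩
    refine ⟨hindm.const_mul t, 1, one_pos, ?_⟩
    have heq : (fun x => Φ (1 * (t * ind x))) = F.indicator fun _ => Φ t := by
      funext x
      by_cases hx : x ∈ F <;>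
        simp [hind, hx, Set.indicator_of_mem, Set.indicator_of_notMem, hΦ.map_zero]
    calc ∫⁻ x, Φ (1 * (t * ind x)) ∂μ = ∫⁻ x, (F.indicator fun _ => Φ t) x ∂μ := by
          rw [heq]
      _ = Φ t * μ F := by rw [lintegral_indicator hF, setLIntegral_const]
      _ < ⊤ := ENNReal.mul_lt_top (hΦ.lt_top t) hFtop
  · rintro f ⟨s, rfl⟩ g ⟨t, rfl⟩ hne
    have hst : s ≠ t := fun hc => hne (by rw [hc])
    exact hdistinct s t hst
  · rintro f ⟨s, rfl⟩ g ⟨t, rfl⟩ hae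
    have hst : s ≠ t := by
      rintro rfl
      exact hae (Filter.EventuallyEq.refl _ _)
    have hdiff : ∀ n : ℕ, ((fun x => s * ind x) - fun x => t * ind x) ∘ φ^[n]
        = fun x => (s - t) * (ind ∘ φ^[n]) x := by
      intro n
      funext x
      simp only [Function.comp_apply, Pi.sub_apply]
      ring
    have hsc : ∀ n : ℕ, luxNorm Φ μ (((fun x => s * ind x) - fun x => t * ind x) ∘ φ^[n])
        = ENNReal.ofReal |s - t| * luxNorm Φ μ (ind ∘ φ^[n]) := by
      intro n
      rw [hdiff n]
      exact luxNorm_smul hΦ (sub_ne_zero.2 hst) _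
    have hr0 : (0 : ℝ≥0∞) < ENNReal.ofReal |s - t| :=
      ENNReal.ofReal_pos.2 (abs_pos.2 (sub_ne_zero.2 hst))
    have hrtop : ENNReal.ofReal |s - t| ≠ ⊤ := ENNReal.ofReal_ne_top
    constructor
    · refine liminf_eq_zero_of ?_
      intro ε hε N
      have hε2 : 0 < ε / ENNReal.ofReal |s - t| := ENNReal.div_pos hε.ne' hrtop
      obtain ⟨n, hn, hle⟩ := freq_le_of_liminf_eq_zero hliminf _ hε2 N
      refine ⟨n, hn, ?_⟩
      rw [hsc n]
      calc ENNReal.ofReal |s - t| * luxNorm Φ μ (ind ∘ φ^[n])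
          ≤ ENNReal.ofReal |s - t| * (ε / ENNReal.ofReal |s - t|) := by gcongr
        _ = ε := ENNReal.mul_div_cancel hr0.ne' hrtop
    · obtain ⟨δ, hδ, hfreq⟩ := exists_freq_of_limsup_pos hlimsup
      refine limsup_pos_of (δ := ENNReal.ofReal |s - t| * δ)
        (ENNReal.mul_pos hr0.ne' hδ.ne') ?_
      intro N
      obtain ⟨n, hn, hge⟩ := hfreq N
      refine ⟨n, hn, ?_⟩
      rw [hsc n]
      gcongr

end E71

end LY

/-- Theorem 2.4 (final equivalence): if `μ(X) < ∞`, `Φ ∈ Δ₂` and `φ` is injective, then the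
conditions (1), (2), (3), (4), (5), (7) are all equivalent. -/
theorem tfae_liYorke_composition
    {X : Type*} [MeasurableSpace X] (μ : Measure X) [IsFiniteMeasure μ]
    (Φ : ℝ → ℝ≥0∞) (hΦ : IsNFunction Φ) (hΔ : Delta2Global Φ)
    (φ : X → X) (hφ : Measurable φ) (hinj : Function.Injective φ)
    (himg : ∀ F : Set X, MeasurableSet F → MeasurableSet (φ '' F))
    (c : ℝ≥0) (hc : 0 < c)
    (hbound : ∀ F : Set X, MeasurableSet F → μ (φ ⁻¹' F) ≤ (c : ℝ≥0∞) * μ F) :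
    [CompLiYorkeChaotic Φ μ φ,
     ∃ f : X → ℝ, MemOrlicz Φ μ f ∧ ¬ f =ᵐ[μ] (fun _ => (0 : ℝ)) ∧
       atTop.liminf (fun n : ℕ => luxNorm Φ μ (f ∘ φ^[n])) = 0,
     ∃ F : Set X, MeasurableSet F ∧ 0 < μ F ∧ μ F < ⊤ ∧
       atTop.limsup (fun n : ℕ => youngInv Φ (1 / μ (φ^[n] ⁻¹' F))) = ⊤,
     ∃ F : Set X, MeasurableSet F ∧ 0 < μ F ∧ μ F < ⊤ ∧
       atTop.limsup (fun n : ℕ => youngInv Φ (1 / μ (φ^[n] '' F))) = ⊤,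
     ∃ F : Set X, MeasurableSet F ∧ 0 < μ F ∧ μ F < ⊤ ∧
       atTop.limsup (fun n : ℕ => youngInv Φ (1 / μ (φ^[n] ⁻¹' F))) = ⊤ ∧
       atTop.limsup (fun n : ℕ => youngInv Φ (1 / μ (φ^[n] '' F))) = ⊤,
     ∃ F : Set X, MeasurableSet F ∧ 0 < μ F ∧ μ F < ⊤ ∧
       atTop.liminf
         (fun n : ℕ => luxNorm Φ μ ((F.indicator fun _ => (1 : ℝ)) ∘ φ^[n])) = 0 ∧
       0 < atTop.limsup
         (fun n : ℕ => luxNorm Φ μ ((F.indicator fun _ => (1 : ℝ)) ∘ φ^[n]))].TFAE := by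
  set cc : ℝ≥0∞ := max (c : ℝ≥0∞) 1 with hccdef
  have hcc1 : 1 ≤ cc := le_max_right _ _
  have hcctop : cc ≠ ⊤ := by
    rw [hccdef]
    exact (max_lt ENNReal.coe_lt_top ENNReal.one_lt_top).ne
  have hbound' : ∀ F : Set X, MeasurableSet F → μ (φ ⁻¹' F) ≤ cc * μ F := fun F hF =>
    le_trans (hbound F hF) (mul_le_mul_left (le_max_left _ _) _)
  tfae_have 1 → 2 := LY.e12 hΦ
  tfae_have 2 → 3 := LY.e23 hΦ hφ
  tfae_have 3 → 5 := by
    rintro ⟨F, hF, hF0, hFtop, hFlim⟩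
    have P := LY.freq_small_of_limsup_youngInv_top hΦ hFlim
    obtain ⟨G, hGmeas, hGsub, hG0, Q⟩ :=
      LY.stage1 hφ hinj himg hcc1 hcctop hbound' hF hF0 P
    refine ⟨G, hGmeas, hG0, lt_of_le_of_lt (measure_mono hGsub) hFtop, ?_, ?_⟩
    · refine LY.limsup_youngInv_top hΦ fun ε hε N => ?_
      obtain ⟨n, hn, hs⟩ := P ε hε N
      exact ⟨n, hn, le_trans (measure_mono (Set.preimage_mono hGsub)) hs⟩
    · exact LY.limsup_youngInv_top hΦ Q
  tfae_have 5 → 4 := by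
    rintro ⟨F, h1, h2, h3, h4, h5⟩
    exact ⟨F, h1, h2, h3, h5⟩
  tfae_have 4 → 5 := by
    rintro ⟨G, hG, hG0, hGtop, hGlim⟩
    have Q := LY.freq_small_of_limsup_youngInv_top hΦ hGlim
    obtain ⟨E, hEmeas, hEsub, hE0, P⟩ :=
      LY.stage2 hφ hinj himg hcc1 hcctop hbound' hG hG0 Q
    refine ⟨E, hEmeas, hE0, lt_of_le_of_lt (measure_mono hEsub) hGtop,
      LY.limsup_youngInv_top hΦ P, LY.limsup_youngInv_top hΦ fun ε hε N => ?_⟩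
    obtain ⟨m, hm, hs⟩ := Q ε hε N
    exact ⟨m, hm, le_trans (measure_mono (Set.image_mono hEsub)) hs⟩
  tfae_have 5 → 6 := by
    rintro ⟨F, hF, hF0, hFtop, hpre, hfwd⟩
    have P := LY.freq_small_of_limsup_youngInv_top hΦ hpre
    have Q := LY.freq_small_of_limsup_youngInv_top hΦ hfwd
    obtain ⟨G, hGmeas, hG0, hGpre, hGbig⟩ :=
      LY.stage3 hφ hinj himg hcc1 hcctop hbound' hF hF0 P Q
    exact ⟨G, hGmeas, hG0, measure_lt_top μ G,
      LY.liminf_luxNorm_indicator_eq_zero hΦ hφ hGmeas hGpre,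
      LY.limsup_luxNorm_indicator_pos hΦ hφ hGmeas hF0 hGbig⟩
  tfae_have 6 → 1 := LY.e71 hΦ
  tfae_finish
end
end

section
/- Let (X, 𝓕, μ) be a σ-finite measure space, Φ a Young function, and φ : X → X a measurable map such that μ(φ⁻¹(F)) ≤ c μ(F) for every F ∈ 𝓕 and some c > 0. Then for every measurable f : X → ℝ, N_Φ(f ∘ φ) ≤ max(1, c) · N_Φ(f). In particular, if f ∈ L^Φ(μ) then f ∘ φ ∈ L^Φ(μ), so C_φ : L^Φ(μ) → L^Φ(μ), C_φ f = f ∘ φ, is a well-defined bounded linear operator. -/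
open MeasureTheory Filter Topology Set
open scoped ENNReal NNReal

noncomputable section

lemma IsYoungFunction.scale {Φ : ℝ → ℝ≥0∞} (hΦ : IsYoungFunction Φ)
    (a : ℝ≥0) (ha : a ≤ 1) (t : ℝ) : Φ ((a : ℝ) * t) ≤ (a : ℝ≥0∞) * Φ t := by
  have h := hΦ.convex t 0 a (1 - a) (by simp [add_tsub_cancel_of_le ha])
  simpa [hΦ.map_zero] using h

lemma IsYoungFunction.abs {Φ : ℝ → ℝ≥0∞} (hΦ : IsYoungFunction Φ) (x : ℝ) :
    Φ x = Φ |x| := by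
  rcases abs_cases x with ⟨h, _⟩ | ⟨h, _⟩
  · rw [h]
  · rw [h, hΦ.even]

lemma IsYoungFunction.measurable {Φ : ℝ → ℝ≥0∞} (hΦ : IsYoungFunction Φ) :
    Measurable Φ := by
  have hmono : Monotone (fun t : ℝ => Φ (max t 0)) := by
    intro s t hst
    exact hΦ.mono (le_max_right _ _) (max_le_max hst le_rfl)
  have h1 : Measurable fun t : ℝ => Φ (max t 0) := hmono.measurable
  have h2 : Φ = (fun t : ℝ => Φ (max t 0)) ∘ (fun x : ℝ => |x|) := by
    funext x
    simp only [Function.comp_apply, max_eq_left (abs_nonneg x)]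
    exact hΦ.abs x
  rw [h2]
  exact h1.comp measurable_abs

/-- Boundedness of the composition operator: if `μ(φ⁻¹(F)) ≤ c μ(F)` for all measurable `F`,
then `N_Φ(f ∘ φ) ≤ max 1 c · N_Φ(f)` for every measurable `f`; in particular `C_φ` maps
`L^Φ(μ)` into itself. -/
theorem luxNorm_comp_le
    {X : Type*} [MeasurableSpace X] (μ : Measure X) [SigmaFinite μ]
    (Φ : ℝ → ℝ≥0∞) (hΦ : IsYoungFunction Φ)
    (φ : X → X) (hφ : Measurable φ) (c : ℝ≥0) (hc : 0 < c)
    (hbound : ∀ F : Set X, MeasurableSet F → μ (φ ⁻¹' F) ≤ (c : ℝ≥0∞) * μ F) :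
    (∀ f : X → ℝ, Measurable f →
      luxNorm Φ μ (f ∘ φ) ≤ ((max 1 c : ℝ≥0) : ℝ≥0∞) * luxNorm Φ μ f) ∧
    ∀ f : X → ℝ, MemOrlicz Φ μ f → MemOrlicz Φ μ (f ∘ φ) := by
  have hle : Measure.map φ μ ≤ (c : ℝ≥0∞) • μ := by
    refine Measure.le_iff.2 fun s hs => ?_
    rw [Measure.map_apply hφ hs, Measure.smul_apply, smul_eq_mul]
    exact hbound s hs
  have hpush : ∀ g : X → ℝ≥0∞, Measurable g →
      ∫⁻ x, g (φ x) ∂μ ≤ (c : ℝ≥0∞) * ∫⁻ x, g x ∂μ := by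
    intro g hg
    rw [← lintegral_map hg hφ, ← smul_eq_mul, ← lintegral_smul_measure]
    exact lintegral_mono' hle le_rfl
  constructor
  · intro f hf
    set M : ℝ≥0 := max 1 c with hM
    have hM1 : (1 : ℝ≥0) ≤ M := le_max_left _ _
    have hM0 : ((M : ℝ≥0∞)) ≠ 0 := by
      simp only [ne_eq, ENNReal.coe_eq_zero]
      exact (lt_of_lt_of_le one_pos hM1).ne'
    have hMt : ((M : ℝ≥0∞)) ≠ ⊤ := ENNReal.coe_ne_top
    conv_rhs => rw [luxNorm]
    rw [ENNReal.mul_iInf_of_ne hM0 hMt]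
    rw [luxNorm]
    refine le_iInf fun k => ?_
    rw [ENNReal.mul_iInf_of_ne hM0 hMt]
    refine le_iInf fun hk => ?_
    rw [ENNReal.mul_iInf_of_ne hM0 hMt]
    refine le_iInf fun hint => ?_
    -- show luxNorm (f ∘ φ) ≤ M * ofReal k = ofReal (M * k)
    have hMk : (0 : ℝ) < (M : ℝ) * k := mul_pos (by exact_mod_cast lt_of_lt_of_le one_pos hM1) hk
    have key : ∫⁻ x, Φ ((f ∘ φ) x / ((M : ℝ) * k)) ∂μ ≤ 1 := by
      have hinv : (M⁻¹ : ℝ≥0) ≤ 1 := by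
        rw [NNReal.inv_le (by positivity)]; simpa using hM1
      have step1 : ∀ x : X, Φ ((f ∘ φ) x / ((M : ℝ) * k)) ≤
          ((M⁻¹ : ℝ≥0) : ℝ≥0∞) * Φ (f (φ x) / k) := by
        intro x
        have : (f ∘ φ) x / ((M : ℝ) * k) = ((M⁻¹ : ℝ≥0) : ℝ) * (f (φ x) / k) := by
          push_cast
          field_simp
          rfl
        rw [this]
        exact hΦ.scale M⁻¹ hinv _
      calc ∫⁻ x, Φ ((f ∘ φ) x / ((M : ℝ) * k)) ∂μ
          ≤ ∫⁻ x, ((M⁻¹ : ℝ≥0) : ℝ≥0∞) * Φ (f (φ x) / k) ∂μ :=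
            lintegral_mono step1
        _ = ((M⁻¹ : ℝ≥0) : ℝ≥0∞) * ∫⁻ x, Φ (f (φ x) / k) ∂μ := lintegral_const_mul _
            ((hΦ.measurable.comp ((hf.comp hφ).div_const k)))
        _ ≤ ((M⁻¹ : ℝ≥0) : ℝ≥0∞) * ((c : ℝ≥0∞) * ∫⁻ x, Φ (f x / k) ∂μ) := by
            gcongr
            exact hpush _ (hΦ.measurable.comp (hf.div_const k))
        _ ≤ ((M⁻¹ : ℝ≥0) : ℝ≥0∞) * ((c : ℝ≥0∞) * 1) := by gcongr
        _ ≤ 1 := by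
            rw [mul_one, ← ENNReal.coe_mul]
            norm_cast
            rw [inv_mul_le_iff₀ (by positivity), mul_one]
            exact le_max_right _ _
    calc luxNorm Φ μ (f ∘ φ) ≤ ENNReal.ofReal ((M : ℝ) * k) :=
          iInf_le_of_le ((M : ℝ) * k) (iInf_le_of_le hMk (iInf_le _ key))
      _ = (M : ℝ≥0∞) * ENNReal.ofReal k := by
          rw [ENNReal.ofReal_mul (by positivity), ENNReal.ofReal_coe_nnreal]
  · rintro f ⟨hf, k, hk, hfin⟩
    refine ⟨hf.comp hφ, k, hk, ?_⟩
    have hmeas : Measurable fun x => Φ (k * f x) :=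
      hΦ.measurable.comp (hf.const_mul k)
    calc ∫⁻ x, Φ (k * (f ∘ φ) x) ∂μ ≤ (c : ℝ≥0∞) * ∫⁻ x, Φ (k * f x) ∂μ :=
          hpush _ hmeas
      _ < ⊤ := ENNReal.mul_lt_top ENNReal.coe_lt_top hfin
end
end

section
/- Let (X, 𝓕, μ) be a σ-finite measure space, Φ an N-function satisfying the Δ₂-condition globally, φ : X → X a nonsingular measurable map, and f ∈ L^Φ(μ) with N_Φ(f) > 0. For i ∈ ℤ set F_i = {x ∈ X : 2^{i-1} ≤ |f(x)| < 2^i} and I = {i ∈ ℤ : μ(F_i) > 0}. If there exists c > 0 such that Φ⁻¹(1/μ(F_i)) ≤ c · Φ⁻¹(1/μ(φ^{-n}(F_i))) for all i ∈ I and all n ∈ ℕ, then there exists M > 0 such that N_Φ(f ∘ φ^n) ≤ M · N_Φ(f) for all n ∈ ℕ; in particular sup_{n∈ℕ} N_Φ(f ∘ φ^n) < ∞. -/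
open MeasureTheory Filter Topology Set
open scoped ENNReal NNReal

noncomputable section

section AuxLemmas

variable {Φ : ℝ → ℝ≥0∞}

lemma young_scale (hΦ : IsNFunction Φ) {t : ℝ} (ht : 0 ≤ t) (ht1 : t ≤ 1) (x : ℝ) :
    Φ (t * x) ≤ ENNReal.ofReal t * Φ x := by
  have h1 : (⟨t, ht⟩ : ℝ≥0) + ⟨1 - t, by linarith⟩ = 1 := by ext; simp
  have := hΦ.convex x 0 ⟨t, ht⟩ ⟨1 - t, by linarith⟩ h1
  change Φ (t * x + (1 - t) * 0) ≤ _ at this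
  simp [hΦ.map_zero, ENNReal.ofReal, Real.toNNReal_of_nonneg ht] at this ⊢
  exact this

lemma young_mono (hΦ : IsNFunction Φ) {a b : ℝ} (ha : 0 ≤ a) (hab : a ≤ b) :
    Φ a ≤ Φ b := by
  rcases eq_or_lt_of_le (ha.trans hab) with h | hb
  · have : a = 0 := le_antisymm (hab.trans h.symm.le) ha
    simp [this, ← h, hΦ.map_zero]
  · have h1 : a = (a / b) * b := by field_simp
    calc Φ a = Φ ((a/b) * b) := by rw [← h1]
    _ ≤ ENNReal.ofReal (a/b) * Φ b := young_scale hΦ (by positivity) (by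
        rw [div_le_one hb]; exact hab) b
    _ ≤ 1 * Φ b := by
        gcongr
        exact ENNReal.ofReal_le_one.2 (by rw [div_le_one hb]; exact hab)
    _ = Φ b := one_mul _

lemma young_abs (hΦ : IsNFunction Φ) (z : ℝ) : Φ z = Φ |z| := by
  rcases abs_cases z with ⟨h, _⟩ | ⟨h, _⟩
  · rw [h]
  · rw [h, ← hΦ.even z]

lemma le_youngInv (hΦ : IsNFunction Φ) {x : ℝ} {y : ℝ≥0∞} (hx : 0 ≤ x) (h : Φ x ≤ y) :
    ENNReal.ofReal x ≤ youngInv Φ y := by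
  refine le_iInf fun x' => le_iInf fun hx' => le_iInf fun hy' => ?_
  refine ENNReal.ofReal_le_ofReal ?_
  by_contra hlt
  push_neg at hlt
  exact absurd ((young_mono hΦ hx' hlt.le).trans h) (not_le.2 hy')

lemma young_le_of_lt_youngInv (hΦ : IsNFunction Φ) {x : ℝ} {y : ℝ≥0∞} (hx : 0 ≤ x)
    (h : ENNReal.ofReal x < youngInv Φ y) : Φ x ≤ y := by
  by_contra hy
  push_neg at hy
  exact absurd (iInf_le_of_le x (iInf_le_of_le hx (iInf_le _ hy))) (not_le.2 h)

lemma lt_young_of_youngInv_lt (hΦ : IsNFunction Φ) {x : ℝ} {y : ℝ≥0∞}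
    (h : youngInv Φ y < ENNReal.ofReal x) : y < Φ x := by
  obtain ⟨x', hx1⟩ := iInf_lt_iff.1 h
  obtain ⟨hx', hx2⟩ := iInf_lt_iff.1 hx1
  obtain ⟨hy', hx3⟩ := iInf_lt_iff.1 hx2
  have : x' ≤ x := by
    by_contra hh
    push_neg at hh
    exact absurd (ENNReal.ofReal_le_ofReal hh.le) (not_le.2 hx3)
  exact hy'.trans_le (young_mono hΦ hx' this)

lemma youngInv_pos (hΦ : IsNFunction Φ) {y : ℝ≥0∞} (hy : 0 < y) : 0 < youngInv Φ y := by
  have hΦ1 : Φ 1 ≠ ⊤ := (hΦ.lt_top 1).ne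
  have hyd : 0 < y / Φ 1 := ENNReal.div_pos hy.ne' hΦ1
  obtain ⟨δ, hδ0, hδ1, hδy⟩ : ∃ δ : ℝ, 0 < δ ∧ δ ≤ 1 ∧ ENNReal.ofReal δ ≤ y / Φ 1 := by
    rcases le_or_gt 1 (y / Φ 1) with h | h
    · exact ⟨1, one_pos, le_refl _, by simpa using h⟩
    · refine ⟨(y / Φ 1).toReal, ENNReal.toReal_pos hyd.ne' h.ne_top, ?_, ?_⟩
      · simpa using ENNReal.toReal_mono ENNReal.one_ne_top h.le
      · rw [ENNReal.ofReal_toReal h.ne_top]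
  refine lt_of_lt_of_le (by simpa using hδ0 : (0:ℝ≥0∞) < ENNReal.ofReal δ) ?_
  refine le_iInf fun x' => le_iInf fun hx' => le_iInf fun hy' => ?_
  refine ENNReal.ofReal_le_ofReal ?_
  by_contra hh
  push_neg at hh
  have hxle : Φ x' ≤ ENNReal.ofReal x' * Φ 1 := by
    simpa using young_scale hΦ hx' (hh.le.trans hδ1) 1
  have : Φ x' ≤ y := by
    calc Φ x' ≤ ENNReal.ofReal x' * Φ 1 := hxle
    _ ≤ (y / Φ 1) * Φ 1 := by
        gcongr
        exact (ENNReal.ofReal_le_ofReal hh.le).trans hδy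
    _ ≤ y := by rw [mul_comm]; exact ENNReal.mul_div_le
  exact absurd this (not_le.2 hy')

lemma youngInv_lt_top (hΦ : IsNFunction Φ) {y : ℝ≥0∞} (hy : y < ⊤) : youngInv Φ y < ⊤ := by
  have : ∀ᶠ x in atTop, Φ x ∈ Ioi y := hΦ.tendsto_atTop (isOpen_Ioi.mem_nhds (by simpa using hy))
  obtain ⟨x₀, hx₀⟩ := this.exists_forall_of_atTop
  set x := max x₀ 0
  have hx : y < Φ x := hx₀ x (le_max_left _ _)
  exact lt_of_le_of_lt (iInf_le_of_le x (iInf_le_of_le (le_max_right _ _) (iInf_le _ hx)))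
    ENNReal.ofReal_lt_top

lemma delta2_iter (hΦ : IsNFunction Φ) {K : ℝ≥0}
    (hK : ∀ x : ℝ, 0 ≤ x → Φ (2 * x) ≤ (K : ℝ≥0∞) * Φ x) (m : ℕ) :
    ∀ z : ℝ, 0 ≤ z → Φ (2 ^ m * z) ≤ (K : ℝ≥0∞) ^ m * Φ z := by
  induction m with
  | zero => simp
  | succ p ih =>
    intro z hz
    have h1 : (2 : ℝ) ^ (p + 1) * z = 2 * (2 ^ p * z) := by ring
    calc Φ (2 ^ (p+1) * z) = Φ (2 * (2 ^ p * z)) := by rw [h1]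
    _ ≤ (K : ℝ≥0∞) * Φ (2 ^ p * z) := hK _ (by positivity)
    _ ≤ (K : ℝ≥0∞) * ((K : ℝ≥0∞) ^ p * Φ z) := mul_le_mul_right (ih z hz) _
    _ = (K : ℝ≥0∞) ^ (p+1) * Φ z := by ring

lemma meas_comp_le (hΦ : IsNFunction Φ) {K : ℝ≥0}
    (hK : ∀ x : ℝ, 0 ≤ x → Φ (2 * x) ≤ (K : ℝ≥0∞) * Φ x)
    {c : ℝ≥0} (hc : 0 < c) {m : ℕ} (hm : 4 * (c : ℝ) ≤ 2 ^ m)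
    {A B : ℝ≥0∞} (hA0 : 0 < A) (hAtop : A < ⊤)
    (hrat : youngInv Φ (1 / A) ≤ (c : ℝ≥0∞) * youngInv Φ (1 / B)) :
    B ≤ (K : ℝ≥0∞) ^ m * A := by
  have hcR : (0:ℝ) < c := hc
  have hc0 : (c : ℝ≥0∞) ≠ 0 := by exact_mod_cast hc.ne'
  have hctop : (c : ℝ≥0∞) ≠ ⊤ := ENNReal.coe_ne_top
  set u := youngInv Φ (1 / A) with hu
  have hu0 : 0 < u := youngInv_pos hΦ (ENNReal.div_pos one_ne_zero hAtop.ne)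
  have hufin : u < ⊤ := youngInv_lt_top hΦ (ENNReal.div_lt_top ENNReal.one_ne_top hA0.ne')
  set t := u.toReal with htdef
  have ht0 : 0 < t := ENNReal.toReal_pos hu0.ne' hufin.ne
  have hofr : ENNReal.ofReal t = u := ENNReal.ofReal_toReal hufin.ne
  -- lower bound for A
  have h2t : u < ENNReal.ofReal (2 * t) := by
    rw [ENNReal.ofReal_mul (by norm_num : (0:ℝ) ≤ 2), hofr]
    rw [ENNReal.ofReal_ofNat, two_mul]
    exact ENNReal.lt_add_right hufin.ne hu0.ne'
  have hΦ2t : 1 / A < Φ (2 * t) := lt_young_of_youngInv_lt hΦ h2t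
  have hAlb : (Φ (2 * t))⁻¹ ≤ A := by
    rw [← inv_inv A]
    exact ENNReal.inv_le_inv.2 (by rw [← one_div]; exact hΦ2t.le)
  -- upper bound for B
  have hβ : u / c ≤ youngInv Φ (1 / B) := by
    rw [ENNReal.div_le_iff_le_mul (Or.inl hc0) (Or.inl hctop), mul_comm]
    exact hrat
  have hs : ENNReal.ofReal (t / (2 * c)) < youngInv Φ (1 / B) := by
    have he : ENNReal.ofReal (t / (2 * c)) = u / c / 2 := by
      rw [ENNReal.ofReal_div_of_pos (by positivity), hofr]
      rw [ENNReal.ofReal_mul (by norm_num : (0:ℝ) ≤ 2)]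
      rw [ENNReal.ofReal_coe_nnreal, ENNReal.ofReal_ofNat]
      rw [ENNReal.div_eq_inv_mul, ENNReal.mul_inv (Or.inr ENNReal.coe_ne_top) (Or.inl (by norm_num))]
      rw [ENNReal.div_eq_inv_mul, ENNReal.div_eq_inv_mul]
      ring
    rw [he]
    refine lt_of_lt_of_le (ENNReal.half_lt_self ?_ ?_) hβ
    · exact (ENNReal.div_pos hu0.ne' hctop).ne'
    · exact (ENNReal.div_lt_top hufin.ne hc0).ne
  have hΦs : Φ (t / (2 * c)) ≤ 1 / B := young_le_of_lt_youngInv hΦ (by positivity) hs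
  have hBub : B ≤ (Φ (t / (2 * c)))⁻¹ := by
    rw [← inv_inv B]
    exact ENNReal.inv_le_inv.2 (by rwa [← one_div])
  -- Δ₂ comparison
  set a := Φ (t / (2 * c)) with ha
  set b := Φ (2 * t) with hb
  have ha0 : a ≠ 0 := by rw [ha, Ne, hΦ.eq_zero_iff]; positivity
  have hatop : a ≠ ⊤ := (hΦ.lt_top _).ne
  have hb0 : b ≠ 0 := by rw [hb, Ne, hΦ.eq_zero_iff]; positivity
  have hbtop : b ≠ ⊤ := (hΦ.lt_top _).ne
  have h2m : b ≤ (K : ℝ≥0∞) ^ m * a := by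
    have hle : 2 * t ≤ 2 ^ m * (t / (2 * c)) := by
      rw [mul_comm ((2:ℝ)^m) _, div_mul_eq_mul_div, le_div_iff₀ (by positivity)]
      nlinarith [mul_le_mul_of_nonneg_left hm ht0.le]
    calc b ≤ Φ (2 ^ m * (t / (2 * c))) := young_mono hΦ (by positivity) hle
    _ ≤ (K : ℝ≥0∞) ^ m * a := delta2_iter hΦ hK m _ (by positivity)
  have hinv : a⁻¹ ≤ (K : ℝ≥0∞) ^ m * b⁻¹ := by
    have h1 : a⁻¹ * b ≤ (K : ℝ≥0∞) ^ m := by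
      calc a⁻¹ * b ≤ a⁻¹ * ((K : ℝ≥0∞) ^ m * a) := mul_le_mul_right h2m _
      _ = (K : ℝ≥0∞) ^ m := by
          rw [mul_comm ((K : ℝ≥0∞) ^ m) a, ← mul_assoc, ENNReal.inv_mul_cancel ha0 hatop, one_mul]
    calc a⁻¹ = a⁻¹ * b * b⁻¹ := by
          rw [mul_assoc, ENNReal.mul_inv_cancel hb0 hbtop, mul_one]
    _ ≤ (K : ℝ≥0∞) ^ m * b⁻¹ := mul_le_mul_left h1 _
  calc B ≤ a⁻¹ := hBub
  _ ≤ (K : ℝ≥0∞) ^ m * b⁻¹ := hinv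
  _ ≤ (K : ℝ≥0∞) ^ m * A := mul_le_mul_right hAlb _

end AuxLemmas

/-- Boundedness of the orbit of `f` under `C_φ` when the ratios
`Φ⁻¹(1/μ(F_i)) / Φ⁻¹(1/μ(φ^{-n}(F_i)))` are uniformly bounded, where
`F_i = {x : 2^{i-1} ≤ |f x| < 2^i}` and `i` ranges over the indices with `μ(F_i) > 0`. -/
theorem luxNorm_orbit_bounded
    {X : Type*} [MeasurableSpace X] (μ : Measure X) [SigmaFinite μ]
    (Φ : ℝ → ℝ≥0∞) (hΦ : IsNFunction Φ) (hΔ : Delta2Global Φ)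
    (φ : X → X) (hφ : Measurable φ)
    (hns : ∀ F : Set X, MeasurableSet F → μ F = 0 → μ (φ ⁻¹' F) = 0)
    (f : X → ℝ) (hf : MemOrlicz Φ μ f) (hfpos : 0 < luxNorm Φ μ f)
    (c : ℝ≥0) (hc : 0 < c)
    (hrat : ∀ i : ℤ, 0 < μ {x : X | (2 : ℝ) ^ (i - 1) ≤ |f x| ∧ |f x| < (2 : ℝ) ^ i} →
      ∀ n : ℕ,
        youngInv Φ (1 / μ {x : X | (2 : ℝ) ^ (i - 1) ≤ |f x| ∧ |f x| < (2 : ℝ) ^ i}) ≤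
        (c : ℝ≥0∞) * youngInv Φ
          (1 / μ (φ^[n] ⁻¹' {x : X | (2 : ℝ) ^ (i - 1) ≤ |f x| ∧ |f x| < (2 : ℝ) ^ i}))) :
    ∃ M : ℝ, 0 < M ∧
      (∀ n : ℕ, luxNorm Φ μ (f ∘ φ^[n]) ≤ ENNReal.ofReal M * luxNorm Φ μ f) ∧
      (⨆ n : ℕ, luxNorm Φ μ (f ∘ φ^[n])) < ⊤ := by
  classical
  obtain ⟨hfm, k₀, hk₀pos, hk₀fin⟩ := hf
  obtain ⟨K, hK0, hK⟩ := hΔ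
  set F : ℤ → Set X := fun i => {x : X | (2 : ℝ) ^ (i - 1) ≤ |f x| ∧ |f x| < (2 : ℝ) ^ i}
    with hFdef
  have hFmeas : ∀ i : ℤ, MeasurableSet (F i) := by
    intro i
    have he : F i = (fun x => |f x|) ⁻¹' (Set.Ico ((2:ℝ)^(i-1)) ((2:ℝ)^i)) := rfl
    rw [he]
    exact hfm.abs measurableSet_Ico
  have hFuniq : ∀ (x : X) (i j : ℤ), x ∈ F i → x ∈ F j → i = j := by
    intro x i j hi hj
    by_contra hne
    rcases lt_or_gt_of_ne hne with h | h
    · exact absurd (lt_of_le_of_lt hj.1 hi.2)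
        (not_lt.2 (zpow_le_zpow_right₀ one_le_two (by omega)))
    · exact absurd (lt_of_le_of_lt hi.1 hj.2)
        (not_lt.2 (zpow_le_zpow_right₀ one_le_two (by omega)))
  have hns' : ∀ (n : ℕ) (E : Set X), MeasurableSet E → μ E = 0 → μ (φ^[n] ⁻¹' E) = 0 := by
    intro n
    induction n with
    | zero => intro E _ hE0; simpa using hE0
    | succ p ih =>
      intro E hE hE0
      rw [Function.iterate_succ, Set.preimage_comp]
      exact hns _ (hE.preimage (hφ.iterate p)) (ih E hE hE0)
  have hcR : (0:ℝ) < c := hc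
  obtain ⟨m, hm⟩ : ∃ m : ℕ, 4 * (c:ℝ) ≤ 2 ^ m := by
    obtain ⟨m, hm⟩ := pow_unbounded_of_one_lt (4 * (c:ℝ)) one_lt_two
    exact ⟨m, hm.le⟩
  set DR : ℝ := (K:ℝ) ^ m with hDR
  have hDR0 : 0 < DR := by positivity
  obtain ⟨q, hq⟩ : ∃ q : ℕ, 2 * (DR + 1) ≤ 2 ^ q := by
    obtain ⟨q, hq⟩ := pow_unbounded_of_one_lt (2 * (DR + 1)) one_lt_two
    exact ⟨q, hq.le⟩
  have hq1 : (2:ℝ) ≤ 2 ^ q := by nlinarith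
  set T : ℝ := 2 / 2 ^ q with hT
  have hT0 : 0 < T := by positivity
  have hT1 : T ≤ 1 := by rw [hT, div_le_one (by positivity)]; exact hq1
  have hTD : ENNReal.ofReal T * ENNReal.ofReal DR ≤ 1 := by
    rw [← ENNReal.ofReal_mul hT0.le]
    refine ENNReal.ofReal_le_one.2 ?_
    rw [hT, div_mul_eq_mul_div, div_le_one (by positivity)]
    nlinarith
  -- key modular estimate
  have key : ∀ k : ℝ, 0 < k → ∫⁻ x, Φ (f x / k) ∂μ ≤ 1 →
      ∀ n : ℕ, ∫⁻ x, Φ ((f ∘ φ^[n]) x / (2 ^ q * k)) ∂μ ≤ 1 := by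
    intro k hk hmod n
    have hS1 : ∑' i : ℤ, Φ ((2:ℝ) ^ (i-1) / k) * μ (F i) ≤ 1 := by
      have hpt : ∀ x, (∑' i : ℤ, (F i).indicator (fun _ => Φ ((2:ℝ) ^ (i-1) / k)) x)
          ≤ Φ (f x / k) := by
        intro x
        by_cases hx : ∃ i, x ∈ F i
        · obtain ⟨i₀, hi₀⟩ := hx
          rw [tsum_eq_single i₀ (fun j hj => Set.indicator_of_notMem
            (fun hxj => hj (hFuniq x j i₀ hxj hi₀)) _)]
          rw [Set.indicator_of_mem hi₀]
          have habs : Φ (f x / k) = Φ (|f x| / k) := by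
            rw [young_abs hΦ (f x / k), abs_div, abs_of_pos hk]
          rw [habs]
          refine young_mono hΦ (by positivity) ?_
          gcongr
          exact hi₀.1
        · push_neg at hx
          simp only [Set.indicator_of_notMem (hx _)]
          simp
      calc ∑' i : ℤ, Φ ((2:ℝ) ^ (i-1) / k) * μ (F i)
          = ∑' i : ℤ, ∫⁻ x, (F i).indicator (fun _ => Φ ((2:ℝ) ^ (i-1) / k)) x ∂μ := by
            congr 1
            funext i
            rw [lintegral_indicator_const (hFmeas i)]
        _ = ∫⁻ x, ∑' i : ℤ, (F i).indicator (fun _ => Φ ((2:ℝ) ^ (i-1) / k)) x ∂μ :=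
            (lintegral_tsum fun i => (measurable_const.indicator (hFmeas i)).aemeasurable).symm
        _ ≤ ∫⁻ x, Φ (f x / k) ∂μ := lintegral_mono hpt
        _ ≤ 1 := hmod
    have hcomp : ∀ i : ℤ, μ (φ^[n] ⁻¹' F i) ≤ ENNReal.ofReal DR * μ (F i) := by
      intro i
      by_cases h0 : μ (F i) = 0
      · rw [hns' n (F i) (hFmeas i) h0]
        simp
      · have hApos : 0 < μ (F i) := zero_lt_iff.2 h0
        have hΦi0 : Φ ((2:ℝ)^(i-1)/k) ≠ 0 := by
          rw [Ne, hΦ.eq_zero_iff]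
          positivity
        have hprod : Φ ((2:ℝ)^(i-1)/k) * μ (F i) ≤ 1 := le_trans (ENNReal.le_tsum i) hS1
        have hAfin : μ (F i) < ⊤ := by
          by_contra hh
          push_neg at hh
          rw [top_le_iff.1 hh, ENNReal.mul_top hΦi0] at hprod
          exact absurd hprod (by simp)
        have hDbound := meas_comp_le hΦ hK hc hm hApos hAfin (hrat i hApos n)
        calc μ (φ^[n] ⁻¹' F i) ≤ (K:ℝ≥0∞)^m * μ (F i) := hDbound
          _ = ENNReal.ofReal DR * μ (F i) := by
              rw [hDR, ENNReal.ofReal_pow K.coe_nonneg, ENNReal.ofReal_coe_nnreal]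
    have hpt2 : ∀ x, Φ ((f ∘ φ^[n]) x / (2 ^ q * k))
        ≤ ∑' i : ℤ, (φ^[n] ⁻¹' F i).indicator (fun _ => Φ ((2:ℝ) ^ i / (2 ^ q * k))) x := by
      intro x
      by_cases hfx : f (φ^[n] x) = 0
      · simp [Function.comp_apply, hfx, hΦ.map_zero]
      · have ht : 0 < |f (φ^[n] x)| := abs_pos.2 hfx
        obtain ⟨j, hj⟩ := exists_mem_Ico_zpow ht one_lt_two
        have hmem : x ∈ φ^[n] ⁻¹' F (j+1) := by
          simp only [Set.mem_preimage, hFdef, Set.mem_setOf_eq, add_sub_cancel_right]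
          exact ⟨hj.1, hj.2⟩
        refine le_trans ?_ (ENNReal.le_tsum (j+1))
        rw [Set.indicator_of_mem hmem]
        have habs : Φ ((f ∘ φ^[n]) x / (2^q*k)) = Φ (|f (φ^[n] x)| / (2^q*k)) := by
          rw [Function.comp_apply, young_abs hΦ _, abs_div,
            abs_of_pos (mul_pos (by positivity : (0:ℝ) < 2^q) hk)]
        rw [habs]
        refine young_mono hΦ (div_nonneg (abs_nonneg _)
          (mul_pos (by positivity : (0:ℝ) < 2^q) hk).le) ?_
        gcongr
        exact hj.2.le
    have hS2 : ∫⁻ x, Φ ((f ∘ φ^[n]) x / (2 ^ q * k)) ∂μ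
        ≤ ∑' i : ℤ, Φ ((2:ℝ) ^ i / (2 ^ q * k)) * μ (φ^[n] ⁻¹' F i) := by
      calc ∫⁻ x, Φ ((f ∘ φ^[n]) x / (2 ^ q * k)) ∂μ
          ≤ ∫⁻ x, ∑' i : ℤ, (φ^[n] ⁻¹' F i).indicator
              (fun _ => Φ ((2:ℝ)^i/(2^q*k))) x ∂μ := lintegral_mono hpt2
        _ = ∑' i : ℤ, ∫⁻ x, (φ^[n] ⁻¹' F i).indicator
              (fun _ => Φ ((2:ℝ)^i/(2^q*k))) x ∂μ :=
            lintegral_tsum fun i => (measurable_const.indicator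
              ((hFmeas i).preimage (hφ.iterate n))).aemeasurable
        _ = ∑' i : ℤ, Φ ((2:ℝ) ^ i / (2 ^ q * k)) * μ (φ^[n] ⁻¹' F i) := by
            congr 1
            funext i
            rw [lintegral_indicator_const ((hFmeas i).preimage (hφ.iterate n))]
    have hterm : ∀ i : ℤ, Φ ((2:ℝ) ^ i / (2 ^ q * k)) * μ (φ^[n] ⁻¹' F i)
        ≤ (ENNReal.ofReal T * ENNReal.ofReal DR) * (Φ ((2:ℝ) ^ (i-1) / k) * μ (F i)) := by
      intro i
      have hsplit : (2:ℝ) ^ i / (2 ^ q * k) = T * ((2:ℝ) ^ (i-1) / k) := by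
        have h2 : (2:ℝ) ^ i = 2 * 2 ^ (i-1) := by
          rw [mul_comm, ← zpow_add_one₀ (two_ne_zero : (2:ℝ) ≠ 0) (i-1), sub_add_cancel]
        rw [hT, h2]
        field_simp
      have h1 : Φ ((2:ℝ) ^ i / (2 ^ q * k)) ≤ ENNReal.ofReal T * Φ ((2:ℝ)^(i-1)/k) := by
        rw [hsplit]
        exact young_scale hΦ hT0.le hT1 _
      calc Φ ((2:ℝ) ^ i / (2^q*k)) * μ (φ^[n] ⁻¹' F i)
          ≤ (ENNReal.ofReal T * Φ ((2:ℝ)^(i-1)/k)) * (ENNReal.ofReal DR * μ (F i)) :=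
            mul_le_mul' h1 (hcomp i)
        _ = (ENNReal.ofReal T * ENNReal.ofReal DR) * (Φ ((2:ℝ)^(i-1)/k) * μ (F i)) := by
            ring
    calc ∫⁻ x, Φ ((f ∘ φ^[n]) x / (2 ^ q * k)) ∂μ
        ≤ ∑' i : ℤ, Φ ((2:ℝ) ^ i / (2 ^ q * k)) * μ (φ^[n] ⁻¹' F i) := hS2
      _ ≤ ∑' i : ℤ, (ENNReal.ofReal T * ENNReal.ofReal DR) *
            (Φ ((2:ℝ) ^ (i-1) / k) * μ (F i)) := ENNReal.tsum_le_tsum hterm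
      _ = (ENNReal.ofReal T * ENNReal.ofReal DR) *
            ∑' i : ℤ, Φ ((2:ℝ) ^ (i-1) / k) * μ (F i) := ENNReal.tsum_mul_left
      _ ≤ (ENNReal.ofReal T * ENNReal.ofReal DR) * 1 := mul_le_mul_right hS1 _
      _ ≤ 1 := by simpa using hTD
  -- an admissible k for f
  obtain ⟨k₁, hk₁pos, hk₁⟩ : ∃ k : ℝ, 0 < k ∧ ∫⁻ x, Φ (f x / k) ∂μ ≤ 1 := by
    set C := ∫⁻ x, Φ (k₀ * f x) ∂μ with hC
    have hCt0 : 0 ≤ C.toReal := ENNReal.toReal_nonneg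
    refine ⟨(C.toReal + 2) / k₀, by positivity, ?_⟩
    have hptw : ∀ x, Φ (f x / ((C.toReal + 2) / k₀))
        ≤ ENNReal.ofReal (1/(C.toReal+2)) * Φ (k₀ * f x) := by
      intro x
      have he : f x / ((C.toReal + 2) / k₀) = (1/(C.toReal+2)) * (k₀ * f x) := by
        field_simp
      rw [he]
      exact young_scale hΦ (by positivity) (by rw [div_le_one (by positivity)]; linarith) _
    calc ∫⁻ x, Φ (f x / ((C.toReal + 2) / k₀)) ∂μ
        ≤ ∫⁻ x, ENNReal.ofReal (1/(C.toReal+2)) * Φ (k₀ * f x) ∂μ := lintegral_mono hptw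
      _ = ENNReal.ofReal (1/(C.toReal+2)) * C := by
          rw [lintegral_const_mul' _ _ ENNReal.ofReal_ne_top]
      _ ≤ ENNReal.ofReal (1/(C.toReal+2)) * ENNReal.ofReal (C.toReal+2) := by
          gcongr
          calc C = ENNReal.ofReal C.toReal := (ENNReal.ofReal_toReal hk₀fin.ne).symm
            _ ≤ ENNReal.ofReal (C.toReal + 2) := ENNReal.ofReal_le_ofReal (by linarith)
      _ ≤ 1 := by
          rw [← ENNReal.ofReal_mul (by positivity), one_div,
            inv_mul_cancel₀ (by positivity)]
          simp
  have hM0 : ENNReal.ofReal ((2:ℝ) ^ q) ≠ 0 := (ENNReal.ofReal_pos.2 (by positivity)).ne'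
  have hMt : ENNReal.ofReal ((2:ℝ) ^ q) ≠ ⊤ := ENNReal.ofReal_ne_top
  have hMle : ∀ n : ℕ, ∀ k : ℝ, 0 < k → ∫⁻ x, Φ (f x / k) ∂μ ≤ 1 →
      luxNorm Φ μ (f ∘ φ^[n]) ≤ ENNReal.ofReal ((2:ℝ) ^ q) * ENNReal.ofReal k := by
    intro n k hk h1
    have hle : luxNorm Φ μ (f ∘ φ^[n]) ≤ ENNReal.ofReal (2 ^ q * k) := by
      simp only [luxNorm]
      exact iInf_le_of_le (2 ^ q * k) (iInf_le_of_le (by positivity)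
        (iInf_le_of_le (key k hk h1 n) le_rfl))
    rwa [ENNReal.ofReal_mul (by positivity)] at hle
  have hnorm : ∀ n : ℕ, luxNorm Φ μ (f ∘ φ^[n])
      ≤ ENNReal.ofReal ((2:ℝ) ^ q) * luxNorm Φ μ f := by
    intro n
    rw [mul_comm, ← ENNReal.div_le_iff_le_mul (Or.inl hM0) (Or.inl hMt)]
    conv_rhs => rw [luxNorm]
    refine le_iInf fun k => le_iInf fun hk => le_iInf fun h1 => ?_
    rw [ENNReal.div_le_iff_le_mul (Or.inl hM0) (Or.inl hMt), mul_comm]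
    exact hMle n k hk h1
  have hlfin : luxNorm Φ μ f < ⊤ := by
    refine lt_of_le_of_lt ?_ (ENNReal.ofReal_lt_top : ENNReal.ofReal k₁ < ⊤)
    simp only [luxNorm]
    exact iInf_le_of_le k₁ (iInf_le_of_le hk₁pos (iInf_le_of_le hk₁ le_rfl))
  refine ⟨2 ^ q, by positivity, hnorm, ?_⟩
  refine lt_of_le_of_lt (iSup_le fun n => hnorm n) ?_
  exact ENNReal.mul_lt_top ENNReal.ofReal_lt_top hlfin
end
end
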